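/- arXiv:1905.10334 — 7 statements merged into one kernel-verified Lean document; each statement's English description precedes it below -/
import Mathlib

section
/- (Sharpness of the radius (K+1)/(5K+1).) Fix k ∈ [0,1) and λ ∈ ℂ with |λ| < 1. Let φ(z) = h(z) = 1/(1−z) = ∑_{n=0}^∞ z^n and g(z) = kλ·z/(1−z) = ∑_{n=1}^∞ kλ z^n on 𝔻. Then φ is univalent with convex image, h ≺ φ, |g'(z)| ≤ k|h'(z)| on 𝔻, dist(φ(0), ∂φ(𝔻)) = 1/2, and for every r ∈ (0,1), ∑_{n=1}^∞ (|a_n| + |b_n|) r^n = (1 + k|λ|)·r/(1−r); in particular this sum exceeds 1/2 whenever 1/(3+2k|λ|) < r < 1. -/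
/-!
The map `z ↦ (1 - z)⁻¹` sends the unit disk onto the half-plane `Re w > 1/2`: for `w = (1 - z)⁻¹`
one has `w - 1 = z w`, and `‖w - 1‖ < ‖w‖` is exactly `Re w > 1/2`. This gives convexity of the
image and the distance `1/2` from `φ 0 = 1` to the boundary line `Re w = 1/2`. Away from `z = 1`,
`g = kλ (φ - 1)`, so `g' = kλ φ'`. All Taylor coefficients are constant, so the Bohr sum is the
geometric series `(1 + k‖λ‖) r / (1 - r)`, which exceeds `1/2` exactly when `r (3 + 2k‖λ‖) > 1`.
-/

open Complex Metric Set

noncomputable section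

/-- The open unit disk in the complex plane. -/
def unitDisk : Set ℂ := Metric.ball 0 1

/-- `h` is subordinate to `φ` on the unit disk: `h = φ ∘ ω` for some analytic
self-map `ω` of the unit disk fixing the origin. -/
def Subordinate (h φ : ℂ → ℂ) : Prop :=
  ∃ ω : ℂ → ℂ, AnalyticOnNhd ℂ ω unitDisk ∧ ω 0 = 0 ∧
    Set.MapsTo ω unitDisk unitDisk ∧ ∀ z ∈ unitDisk, h z = φ (ω z)

theorem Complex.norm_sub_one_lt_norm_iff (w : ℂ) : ‖w - 1‖ < ‖w‖ ↔ 1 / 2 < w.re := by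
  rw [← sq_lt_sq₀ (norm_nonneg _) (norm_nonneg _), Complex.sq_norm, Complex.sq_norm,
    Complex.normSq_apply, Complex.normSq_apply]
  simp only [Complex.sub_re, Complex.one_re, Complex.sub_im, Complex.one_im, sub_zero]
  constructor <;> intro h <;> nlinarith

theorem image_inv_one_sub_unitDisk :
    (fun z : ℂ => (1 - z)⁻¹) '' unitDisk = {w : ℂ | 1 / 2 < w.re} := by
  ext w
  simp only [Set.mem_image, Set.mem_ofPred_eq, unitDisk, mem_ball_zero_iff]
  constructor
  · rintro ⟨z, hz, rfl⟩
    have hz1 : 1 - z ≠ 0 := sub_ne_zero.mpr fun h => by simp [← h] at hz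
    rw [← Complex.norm_sub_one_lt_norm_iff]
    have : (1 - z)⁻¹ - 1 = z * (1 - z)⁻¹ := by field_simp; ring
    rw [this, norm_mul]
    exact mul_lt_of_lt_one_left (norm_pos_iff.mpr (inv_ne_zero hz1)) hz
  · intro hw
    have hw0 : w ≠ 0 := fun h => by norm_num [h] at hw
    refine ⟨1 - w⁻¹, ?_, by simp⟩
    have : 1 - w⁻¹ = (w - 1) / w := by field_simp
    rw [this, norm_div, div_lt_one (norm_pos_iff.mpr hw0)]
    exact (Complex.norm_sub_one_lt_norm_iff w).mpr hw

theorem Subordinate.refl (h : ℂ → ℂ) : Subordinate h h :=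
  ⟨id, analyticOnNhd_id, rfl, Set.mapsTo_id _, fun _ _ => rfl⟩

theorem Complex.infDist_setOf_re_eq (w : ℂ) (c : ℝ) :
    infDist w {z : ℂ | z.re = c} = |w.re - c| := by
  have hmem : (⟨c, w.im⟩ : ℂ) ∈ {z : ℂ | z.re = c} := rfl
  apply le_antisymm
  · calc infDist w {z : ℂ | z.re = c} ≤ dist w ⟨c, w.im⟩ := infDist_le_dist_of_mem hmem
      _ = |w.re - c| := by
        rw [Complex.dist_eq, ← Real.norm_eq_abs, ← Complex.norm_real, Complex.ofReal_sub]
        congr 1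
        apply Complex.ext <;> simp
  · refine (le_infDist ⟨_, hmem⟩).mpr fun z (hz : z.re = c) => ?_
    rw [← hz, ← Complex.sub_re, Complex.dist_eq]
    exact Complex.abs_re_le_norm _

theorem hasSum_mul_pow_of_eq_const_of_pos {b : ℕ → ℂ} {c z : ℂ} (hz : ‖z‖ < 1)
    (hb0 : b 0 = 0) (hb : ∀ n, 1 ≤ n → b n = c) :
    HasSum (fun n => b n * z ^ n) (c * z * (1 - z)⁻¹) := by
  refine (hasSum_nat_add_iff' 1).mp ?_
  simpa [hb0, hb _ (Nat.le_add_left 1 _), pow_succ', mul_assoc]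
    using (hasSum_geometric_of_norm_lt_one hz).mul_left (c * z)

theorem deriv_const_mul_mul_inv_one_sub (c : ℂ) {z : ℂ} (hz : z ≠ 1) :
    deriv (fun w => c * w * (1 - w)⁻¹) z = c * deriv (fun w : ℂ => (1 - w)⁻¹) z := by
  have hev : (fun w : ℂ => c * w * (1 - w)⁻¹) =ᶠ[nhds z] fun w => c * ((1 - w)⁻¹ - 1) := by
    filter_upwards [isOpen_ne.mem_nhds hz] with w hw
    have : 1 - w ≠ 0 := sub_ne_zero.mpr (Ne.symm hw)
    field_simp
    ring
  rw [hev.deriv_eq, deriv_const_mul_field, deriv_sub_const]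

theorem tsum_const_mul_pow_succ (C : ℝ) {r : ℝ} (hr0 : 0 ≤ r) (hr1 : r < 1) :
    ∑' n : ℕ, C * r ^ (n + 1) = C * r / (1 - r) := by
  simp_rw [pow_succ', ← mul_assoc]
  rw [tsum_mul_left, tsum_geometric_of_lt_one hr0 hr1, div_eq_mul_inv]

theorem one_half_lt_mul_div_one_sub {c r : ℝ} (hc : 0 ≤ c) (hr : 1 / (3 + 2 * c) < r)
    (hr1 : r < 1) : 1 / 2 < (1 + c) * r / (1 - r) := by
  rw [div_lt_iff₀ (by positivity)] at hr
  rw [lt_div_iff₀ (by linarith)]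
  linarith

/-- Sharpness of the radius `(K+1)/(5K+1) = 1/(3+2k)`:
for `φ = h = 1/(1-z)` and `g = kλz/(1-z)`, all the hypotheses of the Bohr
theorem hold, `dist(φ(0), ∂φ(𝔻)) = 1/2`, and the Bohr sum equals
`(1 + k|λ|) r/(1-r)`, which exceeds `1/2` for `1/(3+2k|λ|) < r < 1`. -/
theorem bohr_radius_quasiconformal_convex_sharp
    (k : ℝ) (hk : k ∈ Set.Ico (0 : ℝ) 1) (lam : ℂ) (hlam : ‖lam‖ < 1)
    (φ g : ℂ → ℂ) (a b : ℕ → ℂ)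
    (hφ : ∀ z : ℂ, φ z = (1 - z)⁻¹)
    (hg : ∀ z : ℂ, g z = (k : ℂ) * lam * z * (1 - z)⁻¹)
    (ha : ∀ n : ℕ, a n = 1)
    (hb0 : b 0 = 0) (hb : ∀ n : ℕ, 1 ≤ n → b n = (k : ℂ) * lam) :
    Set.InjOn φ unitDisk ∧ Convex ℝ (φ '' unitDisk) ∧
    Subordinate φ φ ∧
    (∀ z ∈ unitDisk, HasSum (fun n : ℕ => a n * z ^ n) (φ z)) ∧
    (∀ z ∈ unitDisk, HasSum (fun n : ℕ => b n * z ^ n) (g z)) ∧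
    (∀ z ∈ unitDisk, ‖deriv g z‖ ≤ k * ‖deriv φ z‖) ∧
    Metric.infDist (φ 0) (frontier (φ '' unitDisk)) = 1 / 2 ∧
    (∀ r : ℝ, r ∈ Set.Ioo (0 : ℝ) 1 →
      ∑' n : ℕ, (‖a (n + 1)‖ + ‖b (n + 1)‖) * r ^ (n + 1)
        = (1 + k * ‖lam‖) * r / (1 - r)) ∧
    (∀ r : ℝ, 1 / (3 + 2 * k * ‖lam‖) < r → r < 1 →
      1 / 2 < ∑' n : ℕ, (‖a (n + 1)‖ + ‖b (n + 1)‖) * r ^ (n + 1)) := by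
  obtain rfl : φ = fun z => (1 - z)⁻¹ := funext hφ
  obtain rfl : g = fun z => (k : ℂ) * lam * z * (1 - z)⁻¹ := funext hg
  have hk0 : 0 ≤ k := hk.1
  have hkl : ‖(k : ℂ) * lam‖ = k * ‖lam‖ := by
    rw [norm_mul, Complex.norm_real, Real.norm_of_nonneg hk0]
  have hsum : ∀ r : ℝ, r ∈ Set.Ioo (0 : ℝ) 1 →
      ∑' n : ℕ, (‖a (n + 1)‖ + ‖b (n + 1)‖) * r ^ (n + 1)
        = (1 + k * ‖lam‖) * r / (1 - r) := fun r hr => by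
    simp_rw [ha, hb _ (Nat.le_add_left 1 _), hkl, norm_one]
    exact tsum_const_mul_pow_succ _ hr.1.le hr.2
  refine ⟨(inv_injective.comp (sub_right_injective (b := (1 : ℂ)))).injOn, ?_,
    Subordinate.refl _, fun z hz => ?_, fun z hz => ?_, fun z hz => ?_, ?_, hsum,
    fun r hr hr1 => ?_⟩
  · rw [image_inv_one_sub_unitDisk]
    exact convex_halfSpace_re_gt _
  · simpa [ha] using hasSum_geometric_of_norm_lt_one (mem_ball_zero_iff.mp hz)
  · exact hasSum_mul_pow_of_eq_const_of_pos (mem_ball_zero_iff.mp hz) hb0 hb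
  · have hz1 : z ≠ 1 := fun h => by simp [unitDisk, h] at hz
    rw [deriv_const_mul_mul_inv_one_sub _ hz1, norm_mul, hkl, mul_assoc]
    gcongr
    exact mul_le_of_le_one_left (norm_nonneg _) hlam.le
  · rw [image_inv_one_sub_unitDisk, Complex.frontier_setOfPred_lt_re,
      Complex.infDist_setOf_re_eq]
    norm_num
  · have hc : 0 ≤ k * ‖lam‖ := mul_nonneg hk0 (norm_nonneg _)
    have hr0 : 0 < r := lt_trans (by positivity) hr
    rw [hsum r ⟨hr0, hr1⟩]
    exact one_half_lt_mul_div_one_sub hc (by rwa [← mul_assoc]) hr1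
end
end

section
/- (Upper bound for the radius in the univalent case with a₀ = b₁ = 0.) Fix k ∈ [0,1). Let φ(z) = h(z) = z/(1−z)² (the Koebe function) on 𝔻 and let g be analytic on 𝔻 with g(0) = 0 and g'(z) = k z h'(z). Then φ is univalent with φ(0) = 0, h ≺ φ, |g'(z)| ≤ k|h'(z)| on 𝔻, g'(0) = 0, dist(0, ∂φ(𝔻)) = 1/4, the Taylor coefficients satisfy |a_n| = n for n ≥ 1 and |b_n| = k(n + 1/n − 2) for n ≥ 2, and for every r ∈ (0,1), ∑_{n=1}^∞ |a_n| r^n + ∑_{n=2}^∞ |b_n| r^n = r(1 + k(2r−1))/(1−r)² − k·log(1−r); in particular this sum exceeds 1/4 whenever R < r < 1, where R ∈ (0,1) is the root of R(1−k+2kR)/(1−R)² − k·log(1−R) = 1/4. -/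
/-!
The Cayley map `ζ = (1 + z) / (1 - z)` sends `𝔻` onto the right half-plane and turns the Koebe
function into `4 φ + 1 = ζ²`; hence `φ` is injective on `𝔻` and `φ(𝔻)` is the plane minus the
ray `(-∞, -1/4]`, which lies at distance `1/4` from `0`. Comparing Taylor coefficients of
`h = ∑ n zⁿ` and of `z g' = k z (z h')` gives `aₙ = n` and `n bₙ = k (n - 1)²`. The Bohr sum is
then a combination of `∑ n rⁿ`, `∑ rⁿ` and `∑ rⁿ / n = -log (1 - r)`, and since its coefficients
are nonnegative it increases strictly with `r`, from its value `1/4` at `R`.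
-/

open Complex Metric Set

noncomputable section

open FormalMultilinearSeries
open scoped NNReal ComplexOrder

section PowerSeries

variable {f : ℂ → ℂ} {c d : ℕ → ℂ} {r : ℝ≥0}

theorem hasFPowerSeriesOnBall_ofScalars_of_hasSum (hr : 0 < r)
    (hc : ∀ z ∈ ball (0 : ℂ) r, HasSum (fun n => c n * z ^ n) (f z)) :
    HasFPowerSeriesOnBall f (ofScalars ℂ c) 0 r where
  r_le := by
    refine ENNReal.le_of_forall_nnreal_lt fun s hs => le_radius_of_tendsto _ (l := 0) ?_
    have hs' : ((s : ℝ) : ℂ) ∈ ball (0 : ℂ) r := by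
      simpa [abs_of_nonneg s.coe_nonneg] using hs
    simpa [ofScalars_norm, abs_of_nonneg s.coe_nonneg] using
      (hc _ hs').summable.tendsto_atTop_zero.norm
  r_pos := by simpa using hr
  hasSum {y} hy := by
    simpa [ofScalars_apply_eq, mul_comm] using hc y (by simpa [← ofReal_norm] using hy)

theorem eq_of_hasSum_mul_pow (hr : 0 < r)
    (hc : ∀ z ∈ ball (0 : ℂ) r, HasSum (fun n => c n * z ^ n) (f z))
    (hd : ∀ z ∈ ball (0 : ℂ) r, HasSum (fun n => d n * z ^ n) (f z)) : c = d :=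
  ofScalars_series_injective ℂ ℂ <|
    (hasFPowerSeriesOnBall_ofScalars_of_hasSum hr hc).hasFPowerSeriesAt.eq_formalMultilinearSeries
      (hasFPowerSeriesOnBall_ofScalars_of_hasSum hr hd).hasFPowerSeriesAt

theorem hasSum_mul_deriv_of_hasSum (hr : 0 < r)
    (hc : ∀ z ∈ ball (0 : ℂ) r, HasSum (fun n => c n * z ^ n) (f z)) {z : ℂ}
    (hz : z ∈ ball (0 : ℂ) r) : HasSum (fun n => n * c n * z ^ n) (z * deriv f z) := by
  have hfd := (hasFPowerSeriesOnBall_ofScalars_of_hasSum hr hc).fderiv.hasSum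
    (y := z) (by simpa [← ofReal_norm] using hz)
  have hsucc := hfd.mapL (ContinuousLinearMap.apply ℂ ℂ z)
  simp only [ContinuousLinearMap.apply_apply, derivSeries_apply_diag, ofScalars_apply_eq,
    zero_add, nsmul_eq_mul, smul_eq_mul] at hsucc
  exact (hasSum_nat_add_iff' (f := fun n => (n : ℂ) * c n * z ^ n) 1).mp
    (by simpa [mul_assoc] using hsucc)

theorem coeff_succ_eq_of_hasSum_mul_pow_succ (hr : 0 < r)
    (hc : ∀ z ∈ ball (0 : ℂ) r, HasSum (fun n => c n * z ^ n) (f z))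
    (hd : ∀ z ∈ ball (0 : ℂ) r, HasSum (fun n => d n * z ^ (n + 1)) (f z)) (n : ℕ) :
    c (n + 1) = d n := by
  have hshift : c = fun n => if n = 0 then 0 else d (n - 1) := by
    refine eq_of_hasSum_mul_pow hr hc fun z hz => ?_
    exact (hasSum_nat_add_iff' (f := fun n => (if n = 0 then 0 else d (n - 1)) * z ^ n) 1).mp
      (by simpa using hd z hz)
  simp [hshift]

end PowerSeries

def koebe (z : ℂ) : ℂ := z * ((1 - z) ^ 2)⁻¹

theorem hasSum_koebe {z : ℂ} (hz : ‖z‖ < 1) : HasSum (fun n : ℕ => (n : ℂ) * z ^ n) (koebe z) := by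
  simpa [koebe, div_eq_mul_inv] using hasSum_coe_mul_geometric_of_norm_lt_one hz

theorem koebe_injOn : InjOn koebe (ball 0 1) := by
  intro z hz w hw hzw
  rw [mem_ball_zero_iff] at hz hw
  have hz1 : 1 - z ≠ 0 := sub_ne_zero.2 fun h => by simp [← h] at hz
  have hw1 : 1 - w ≠ 0 := sub_ne_zero.2 fun h => by simp [← h] at hw
  have hfactor : (z - w) * (1 - z * w) = 0 := by
    simp only [koebe] at hzw
    field_simp at hzw
    linear_combination hzw
  rcases mul_eq_zero.mp hfactor with h | h
  · exact sub_eq_zero.mp h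
  · have : ‖z * w‖ < 1 := by
      rw [norm_mul]
      exact mul_lt_one_of_nonneg_of_lt_one_left (norm_nonneg z) hz hw.le
    simp [← sub_eq_zero.mp h] at this

theorem norm_lt_one_iff_re_pos {z : ℂ} (hz : z ≠ 1) : ‖z‖ < 1 ↔ 0 < ((1 + z) / (1 - z)).re := by
  have hn : 0 < normSq (1 - z) := normSq_pos.2 (sub_ne_zero.2 hz.symm)
  rw [div_re, ← add_div, div_pos_iff_of_pos_right hn, ← sq_lt_one_iff₀ (norm_nonneg z),
    Complex.sq_norm, normSq_apply]
  simp only [add_re, one_re, sub_re, add_im, one_im, sub_im]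
  constructor <;> intro h <;> linarith

theorem four_mul_koebe_add_one {z : ℂ} (hz : z ≠ 1) :
    4 * koebe z + 1 = ((1 + z) / (1 - z)) ^ 2 := by
  have : 1 - z ≠ 0 := sub_ne_zero.2 hz.symm
  simp only [koebe]
  field_simp
  ring

theorem sq_mem_slitPlane {ζ : ℂ} (hζ : 0 < ζ.re) : ζ ^ 2 ∈ slitPlane := by
  rw [mem_slitPlane_iff, sq, mul_re, mul_im]
  by_cases h : ζ.im = 0
  · left
    simp [h, hζ]
  · right
    have : ζ.re * ζ.im ≠ 0 := mul_ne_zero hζ.ne' h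
    contrapose! this
    linarith [mul_comm ζ.re ζ.im]

theorem exists_sq_eq_of_mem_slitPlane {u : ℂ} (hu : u ∈ slitPlane) :
    ∃ ζ : ℂ, 0 < ζ.re ∧ ζ ^ 2 = u := by
  obtain ⟨s, hs⟩ := IsAlgClosed.exists_pow_nat_eq u two_pos
  rcases lt_trichotomy s.re 0 with h | h | h
  · exact ⟨-s, by simpa using h, by rw [neg_sq, hs]⟩
  · rw [mem_slitPlane_iff, ← hs, sq, mul_re, mul_im, h] at hu
    simp only [mul_zero, zero_mul, zero_sub, add_zero, ne_eq, not_true_eq_false, or_false] at hu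
    nlinarith
  · exact ⟨s, h, hs⟩

theorem four_mul_add_one_mem_slitPlane_iff {w : ℂ} :
    4 * w + 1 ∈ slitPlane ↔ w ∉ Iic (-(1 / 4)) := by
  rw [mem_slitPlane_iff_not_le_zero, mem_Iic, not_iff_not, le_def, le_def]
  norm_num
  exact fun _ => by constructor <;> intro h <;> linarith

-- In `ComplexOrder`, `Iic (-(1 / 4))` is the real ray `(-∞, -1/4]`.
theorem koebe_image_ball : koebe '' ball 0 1 = (Iic (-(1 / 4)))ᶜ := by
  ext w
  rw [mem_compl_iff, ← four_mul_add_one_mem_slitPlane_iff]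
  constructor
  · rintro ⟨z, hz, rfl⟩
    rw [mem_ball_zero_iff] at hz
    have hz1 : z ≠ 1 := by rintro rfl; simp at hz
    rw [four_mul_koebe_add_one hz1]
    exact sq_mem_slitPlane ((norm_lt_one_iff_re_pos hz1).1 hz)
  · intro hw
    obtain ⟨ζ, hζ, hζw⟩ := exists_sq_eq_of_mem_slitPlane hw
    have hζ1 : ζ + 1 ≠ 0 := fun h => by
      have := congrArg re h
      simp only [add_re, one_re, zero_re] at this
      linarith
    set z := (ζ - 1) / (ζ + 1)
    have hz1 : z ≠ 1 := fun h => by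
      rw [div_eq_one_iff_eq hζ1] at h
      have : (2 : ℂ) = 0 := by linear_combination -h
      norm_num at this
    have hcayley : (1 + z) / (1 - z) = ζ := by
      rw [div_eq_iff (sub_ne_zero.2 hz1.symm)]
      simp only [z]
      field_simp
      ring
    refine ⟨z, mem_ball_zero_iff.2 ((norm_lt_one_iff_re_pos hz1).2 (hcayley ▸ hζ)), ?_⟩
    have := four_mul_koebe_add_one hz1
    rw [hcayley, hζw] at this
    linear_combination this / 4

theorem interior_Iic_eq_empty (c : ℂ) : interior (Iic c) = ∅ := by
  refine eq_empty_iff_forall_notMem.2 fun w hw => ?_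
  obtain ⟨ε, hε, hball⟩ := isOpen_iff.mp isOpen_interior w hw
  have hdist : dist (w + (ε / 2 : ℝ) * I) w = ε / 2 := by simp [abs_of_pos hε]
  have hshift : w + (ε / 2 : ℝ) * I ∈ Iic c :=
    interior_subset (hball (mem_ball.2 (by rw [hdist]; linarith)))
  have hwc := interior_subset hw
  simp only [mem_Iic, le_def, add_im, mul_im, ofReal_re, ofReal_im, I_re, I_im] at hshift hwc
  linarith

theorem frontier_compl_Iic (c : ℂ) : frontier (Iic c)ᶜ = Iic c := by
  rw [frontier_compl, isClosed_Iic.frontier_eq, interior_Iic_eq_empty, sdiff_empty]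

theorem infDist_zero_Iic {c : ℂ} (hc : c ≤ 0) : infDist 0 (Iic c) = ‖c‖ := by
  refine le_antisymm (by simpa using infDist_le_dist_of_mem (x := (0 : ℂ)) (mem_Iic.2 le_rfl)) ?_
  refine (le_infDist nonempty_Iic).2 fun w hw => ?_
  rw [dist_zero_left]
  rw [le_def] at hc
  rw [mem_Iic, le_def] at hw
  obtain ⟨hcre, hcim⟩ := hc
  have hc' : c = (c.re : ℂ) := ext rfl (by simpa using hcim)
  rw [hc', norm_real, Real.norm_of_nonpos (by simpa using hcre)]
  calc -c.re ≤ -w.re := by linarith [hw.1]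
    _ ≤ |w.re| := neg_le_abs _
    _ ≤ ‖w‖ := abs_re_le_norm w

theorem hasSum_succ_mul_pow_succ {r : ℝ} (hr : |r| < 1) :
    HasSum (fun n : ℕ => ((n : ℝ) + 1) * r ^ (n + 1)) (r / (1 - r) ^ 2) := by
  simpa using (hasSum_nat_add_iff' 1).mpr (hasSum_coe_mul_geometric_of_norm_lt_one (𝕜 := ℝ) hr)

theorem hasSum_add_one_div_sub_two_mul_pow {r : ℝ} (hr : |r| < 1) :
    HasSum (fun n : ℕ => ((n : ℝ) + 2 + 1 / ((n : ℝ) + 2) - 2) * r ^ (n + 2))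
      (r * (2 * r - 1) / (1 - r) ^ 2 - Real.log (1 - r)) := by
  have h1r : 1 - r ≠ 0 := by linarith [(abs_lt.1 hr).2]
  have hgeom : HasSum (fun n : ℕ => r ^ (n + 1)) (r / (1 - r)) := by
    simpa [pow_succ, div_eq_mul_inv, mul_comm] using (hasSum_geometric_of_abs_lt_one hr).mul_left r
  have hsucc : HasSum (fun n : ℕ => ((n : ℝ) + 1 + 1 / ((n : ℝ) + 1) - 2) * r ^ (n + 1))
      (r * (2 * r - 1) / (1 - r) ^ 2 - Real.log (1 - r)) := by
    rw [show r * (2 * r - 1) / (1 - r) ^ 2 - Real.log (1 - r)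
        = r / (1 - r) ^ 2 - 2 * (r / (1 - r)) + -Real.log (1 - r) by field_simp; ring]
    exact (((hasSum_succ_mul_pow_succ hr).sub (hgeom.mul_left 2)).add
      (Real.hasSum_pow_div_log_of_abs_lt_one hr)).congr_fun fun n => by ring
  have hshift := (hasSum_nat_add_iff' 1).mpr hsucc
  norm_num at hshift
  exact hshift.congr_fun fun n => by ring

theorem coeff_succ_of_deriv_eq_mul_deriv_koebe {k : ℂ} {g : ℂ → ℂ} {b : ℕ → ℂ}
    (hb : ∀ z ∈ ball (0 : ℂ) 1, HasSum (fun n => b n * z ^ n) (g z))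
    (hg' : ∀ z ∈ ball (0 : ℂ) 1, deriv g z = k * z * deriv koebe z) (n : ℕ) :
    ((n : ℂ) + 1) * b (n + 1) = k * n ^ 2 := by
  have hkoebe : ∀ z ∈ ball (0 : ℂ) 1, HasSum (fun n : ℕ => (n : ℂ) * z ^ n) (koebe z) :=
    fun z hz => hasSum_koebe (mem_ball_zero_iff.1 hz)
  have hderiv : ∀ z ∈ ball (0 : ℂ) 1,
      HasSum (fun n : ℕ => k * n ^ 2 * z ^ (n + 1)) (z * deriv g z) := fun z hz => by
    rw [hg' z hz, mul_left_comm]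
    exact ((hasSum_mul_deriv_of_hasSum (r := 1) one_pos hkoebe hz).mul_left (k * z)).congr_fun
      fun n => by ring
  simpa using coeff_succ_eq_of_hasSum_mul_pow_succ (r := 1) one_pos
    (fun z hz => hasSum_mul_deriv_of_hasSum one_pos hb hz) hderiv n

theorem norm_coeff_of_deriv_eq_mul_deriv_koebe {k : ℝ} (hk : 0 ≤ k) {g : ℂ → ℂ} {b : ℕ → ℂ}
    (hb : ∀ z ∈ ball (0 : ℂ) 1, HasSum (fun n => b n * z ^ n) (g z))
    (hg' : ∀ z ∈ ball (0 : ℂ) 1, deriv g z = k * z * deriv koebe z) {n : ℕ} (hn : n ≠ 0) :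
    ‖b n‖ = k * (n + 1 / n - 2) := by
  obtain ⟨m, rfl⟩ := Nat.exists_eq_succ_of_ne_zero hn
  have hcoeff := coeff_succ_of_deriv_eq_mul_deriv_koebe hb hg' m
  have hm : (m : ℂ) + 1 ≠ 0 := Nat.cast_add_one_ne_zero m
  have hb' : b (m + 1) = ((k * m ^ 2 / (m + 1) : ℝ) : ℂ) := by
    push_cast
    field_simp
    linear_combination hcoeff
  rw [hb', norm_real, Real.norm_of_nonneg (by positivity)]
  push_cast
  field_simp
  ring

theorem tsum_mul_pow_le_tsum_mul_pow {c : ℕ → ℝ} {e : ℕ → ℕ} (hc : ∀ n, 0 ≤ c n) {s r : ℝ}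
    (hs : 0 ≤ s) (hsr : s ≤ r) (hsum : Summable fun n => c n * r ^ e n) :
    ∑' n, c n * s ^ e n ≤ ∑' n, c n * r ^ e n := by
  have hle : ∀ n, c n * s ^ e n ≤ c n * r ^ e n := fun n => by gcongr; exact hc n
  exact (hsum.of_nonneg_of_le (fun n => mul_nonneg (hc n) (pow_nonneg hs _)) hle).tsum_le_tsum
    hle hsum

section BohrSum

variable {k : ℝ} {a b : ℕ → ℂ}

def bohrSum (a b : ℕ → ℂ) (r : ℝ) : ℝ :=
  (∑' n : ℕ, ‖a (n + 1)‖ * r ^ (n + 1)) + ∑' n : ℕ, ‖b (n + 2)‖ * r ^ (n + 2)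

theorem hasSum_norm_mul_pow_succ (ha : ∀ n, ‖a n‖ = n) {r : ℝ} (hr : |r| < 1) :
    HasSum (fun n => ‖a (n + 1)‖ * r ^ (n + 1)) (r / (1 - r) ^ 2) :=
  (hasSum_succ_mul_pow_succ hr).congr_fun fun n => by
    rw [ha]
    push_cast
    rfl

theorem hasSum_norm_mul_pow_add_two (hb : ∀ n, n ≠ 0 → ‖b n‖ = k * (n + 1 / n - 2)) {r : ℝ}
    (hr : |r| < 1) : HasSum (fun n => ‖b (n + 2)‖ * r ^ (n + 2))
      (k * (r * (2 * r - 1) / (1 - r) ^ 2 - Real.log (1 - r))) :=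
  ((hasSum_add_one_div_sub_two_mul_pow hr).mul_left k).congr_fun fun n => by
    rw [hb (n + 2) (by omega)]
    push_cast
    ring

theorem bohrSum_eq (ha : ∀ n, ‖a n‖ = n) (hb : ∀ n, n ≠ 0 → ‖b n‖ = k * (n + 1 / n - 2))
    {r : ℝ} (hr : |r| < 1) :
    bohrSum a b r = r * (1 + k * (2 * r - 1)) / (1 - r) ^ 2 - k * Real.log (1 - r) := by
  have : 1 - r ≠ 0 := by linarith [(abs_lt.1 hr).2]
  rw [bohrSum, (hasSum_norm_mul_pow_succ ha hr).tsum_eq,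
    (hasSum_norm_mul_pow_add_two hb hr).tsum_eq]
  field_simp
  ring

theorem bohrSum_lt_bohrSum (ha : ∀ n, ‖a n‖ = n)
    (hb : ∀ n, n ≠ 0 → ‖b n‖ = k * (n + 1 / n - 2)) {s r : ℝ} (hs : 0 ≤ s) (hsr : s < r)
    (hr : r < 1) : bohrSum a b s < bohrSum a b r := by
  have hs' : |s| < 1 := abs_lt.2 ⟨by linarith, by linarith⟩
  have hr' : |r| < 1 := abs_lt.2 ⟨by linarith, hr⟩
  rw [bohrSum, bohrSum, (hasSum_norm_mul_pow_succ ha hs').tsum_eq,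
    (hasSum_norm_mul_pow_succ ha hr').tsum_eq]
  refine add_lt_add_of_lt_of_le ?_ (tsum_mul_pow_le_tsum_mul_pow (fun n => norm_nonneg _) hs
    hsr.le (hasSum_norm_mul_pow_add_two hb hr').summable)
  have : 0 < 1 - r := by linarith
  gcongr
  linarith

end BohrSum

theorem bohr_radius_univalent_b1_zero_sharp_general
    (k : ℝ) (hk : k ∈ Set.Ico (0 : ℝ) 1)
    (φ h g : ℂ → ℂ) (a b : ℕ → ℂ)
    (hφ : ∀ z : ℂ, φ z = z * ((1 - z) ^ 2)⁻¹)
    (hh : ∀ z : ℂ, h z = z * ((1 - z) ^ 2)⁻¹)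
    (hg' : ∀ z ∈ unitDisk, deriv g z = (k : ℂ) * z * deriv h z)
    (ha : ∀ z ∈ unitDisk, HasSum (fun n : ℕ => a n * z ^ n) (h z))
    (hb : ∀ z ∈ unitDisk, HasSum (fun n : ℕ => b n * z ^ n) (g z))
    (R : ℝ) (hR : R ∈ Set.Ioo (0 : ℝ) 1)
    (hRroot : R * (1 - k + 2 * k * R) / (1 - R) ^ 2 - k * Real.log (1 - R) = 1 / 4) :
    Set.InjOn φ unitDisk ∧ φ 0 = 0 ∧
    Subordinate h φ ∧
    (∀ z ∈ unitDisk, ‖deriv g z‖ ≤ k * ‖deriv h z‖) ∧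
    deriv g 0 = 0 ∧
    Metric.infDist 0 (frontier (φ '' unitDisk)) = 1 / 4 ∧
    (∀ n : ℕ, 1 ≤ n → ‖a n‖ = n) ∧
    (∀ n : ℕ, 2 ≤ n → ‖b n‖ = k * ((n : ℝ) + 1 / n - 2)) ∧
    (∀ r : ℝ, r ∈ Set.Ioo (0 : ℝ) 1 →
      (∑' n : ℕ, ‖a (n + 1)‖ * r ^ (n + 1)) +
        (∑' n : ℕ, ‖b (n + 2)‖ * r ^ (n + 2))
        = r * (1 + k * (2 * r - 1)) / (1 - r) ^ 2 - k * Real.log (1 - r)) ∧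
    (∀ r : ℝ, R < r → r < 1 →
      1 / 4 < (∑' n : ℕ, ‖a (n + 1)‖ * r ^ (n + 1)) +
        (∑' n : ℕ, ‖b (n + 2)‖ * r ^ (n + 2))) := by
  obtain rfl : φ = koebe := funext hφ
  obtain rfl : h = koebe := funext hh
  have ha' : ∀ n, ‖a n‖ = n := by
    rw [eq_of_hasSum_mul_pow (r := 1) one_pos ha fun z hz => hasSum_koebe (mem_ball_zero_iff.1 hz)]
    simp
  have hb' : ∀ n, n ≠ 0 → ‖b n‖ = k * (n + 1 / n - 2) :=
    fun n hn => norm_coeff_of_deriv_eq_mul_deriv_koebe hk.1 hb hg' hn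
  refine ⟨koebe_injOn, by simp [koebe], ⟨id, analyticOnNhd_id, rfl, mapsTo_id _, fun _ _ => rfl⟩,
    fun z hz => ?_, by simp [hg' 0 (mem_ball_self one_pos)], ?_, fun n _ => ha' n,
    fun n hn => hb' n (by omega),
    fun r hr => bohrSum_eq ha' hb' (abs_lt.2 ⟨by linarith [hr.1], hr.2⟩), fun r hRr hr1 => ?_⟩
  · rw [hg' z hz, norm_mul, norm_mul, norm_real, Real.norm_of_nonneg hk.1]
    gcongr
    exact mul_le_of_le_one_right hk.1 (mem_ball_zero_iff.1 hz).le
  · rw [unitDisk, koebe_image_ball, frontier_compl_Iic, infDist_zero_Iic (by simp)]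
    norm_num
  · calc 1 / 4 = bohrSum a b R := by
          rw [bohrSum_eq ha' hb' (abs_lt.2 ⟨by linarith [hR.1], hR.2⟩), ← hRroot]
          ring
      _ < bohrSum a b r := bohrSum_lt_bohrSum ha' hb' hR.1.le hRr hr1

/-- Upper bound for the Bohr radius in the univalent case
with `a₀ = b₁ = 0`: for the Koebe function `φ = h = z/(1-z)²` and `g' = kz h'`,
`g(0) = 0`, all the hypotheses hold, `dist(0, ∂φ(𝔻)) = 1/4`, the coefficients
are `|aₙ| = n` and `|bₙ| = k(n + 1/n - 2)`, the Bohr sum equals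
`r(1+k(2r-1))/(1-r)² - k log(1-r)`, and it exceeds `1/4` for `R < r < 1`,
where `R` is the root of `R(1-k+2kR)/(1-R)² - k log(1-R) = 1/4`. -/
theorem bohr_radius_univalent_b1_zero_sharp
    (k : ℝ) (hk : k ∈ Set.Ico (0 : ℝ) 1)
    (φ h g : ℂ → ℂ) (a b : ℕ → ℂ)
    (hφ : ∀ z : ℂ, φ z = z * ((1 - z) ^ 2)⁻¹)
    (hh : ∀ z : ℂ, h z = z * ((1 - z) ^ 2)⁻¹)
    (hgan : AnalyticOnNhd ℂ g unitDisk) (hg0 : g 0 = 0)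
    (hg' : ∀ z ∈ unitDisk, deriv g z = (k : ℂ) * z * deriv h z)
    (ha : ∀ z ∈ unitDisk, HasSum (fun n : ℕ => a n * z ^ n) (h z))
    (hb : ∀ z ∈ unitDisk, HasSum (fun n : ℕ => b n * z ^ n) (g z))
    (R : ℝ) (hR : R ∈ Set.Ioo (0 : ℝ) 1)
    (hRroot : R * (1 - k + 2 * k * R) / (1 - R) ^ 2 - k * Real.log (1 - R) = 1 / 4) :
    Set.InjOn φ unitDisk ∧ φ 0 = 0 ∧
    Subordinate h φ ∧
    (∀ z ∈ unitDisk, ‖deriv g z‖ ≤ k * ‖deriv h z‖) ∧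
    deriv g 0 = 0 ∧
    Metric.infDist 0 (frontier (φ '' unitDisk)) = 1 / 4 ∧
    (∀ n : ℕ, 1 ≤ n → ‖a n‖ = n) ∧
    (∀ n : ℕ, 2 ≤ n → ‖b n‖ = k * ((n : ℝ) + 1 / n - 2)) ∧
    (∀ r : ℝ, r ∈ Set.Ioo (0 : ℝ) 1 →
      (∑' n : ℕ, ‖a (n + 1)‖ * r ^ (n + 1)) +
        (∑' n : ℕ, ‖b (n + 2)‖ * r ^ (n + 2))
        = r * (1 + k * (2 * r - 1)) / (1 - r) ^ 2 - k * Real.log (1 - r)) ∧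
    (∀ r : ℝ, R < r → r < 1 →
      1 / 4 < (∑' n : ℕ, ‖a (n + 1)‖ * r ^ (n + 1)) +
        (∑' n : ℕ, ‖b (n + 2)‖ * r ^ (n + 2))) :=
  bohr_radius_univalent_b1_zero_sharp_general k hk φ h g a b hφ hh hg' ha hb R hR hRroot
end
end

section
/- Let λ ∈ (0,1] and α ∈ ℂ \ {0}, and define φ(z) = αz/((1+z)(1+λz)) for z ∈ 𝔻. Then φ is univalent (injective) on 𝔻 and dist(φ(0), ∂φ(𝔻)) = |α|/(2(1+λ)), i.e. the Euclidean distance from 0 = φ(0) to the boundary of the image φ(𝔻) equals |α|/(2(1+λ)). -/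
/-!
The identity `φ z - φ w = α (z - w)(1 - λ z w) / (denominators)` shows at once that `φ` is
univalent on `𝔻` and that it omits `φ 1 = α / (2(1 + λ))`, a point of the closure of `φ(𝔻)`.
Conversely, for `w ≠ 0` the equation `φ z = w` is a quadratic in `z` whose roots `u, v` satisfy
`λ u v = 1` and `λ w (u + v) = α - (1 + λ) w`. If both roots lay outside `𝔻`, then
`|u| ∈ [1, 1/λ]` gives `λ|u| + λ|v| = λ|u| + 1/|u| ≤ 1 + λ`, hence `|α| ≤ 2(1 + λ)|w|`.
So `φ(𝔻)` contains the disk of radius `|α| / (2(1 + λ))` about `0`, and the boundary point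
`φ 1` lies on its circumference.
-/

open Complex Metric Set

noncomputable section

theorem infDist_frontier_eq_of_ball_subset {X : Type*} [PseudoMetricSpace X] {S : Set X}
    {x p : X} {r : ℝ} (hball : ball x r ⊆ S) (hp : p ∈ frontier S) (hpr : dist x p = r) :
    infDist x (frontier S) = r := by
  refine le_antisymm (hpr ▸ infDist_le_dist_of_mem hp) ((le_infDist ⟨p, hp⟩).2 fun y hy => ?_)
  by_contra! hlt
  have hy_int : y ∈ interior S := interior_maximal hball isOpen_ball (mem_ball.2 (by
    rwa [dist_comm]))
  exact disjoint_interior_frontier.le_bot ⟨hy_int, hy⟩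

theorem Complex.exists_roots_sum_prod {a b c : ℂ} (ha : a ≠ 0) :
    ∃ u v : ℂ, a * (u + v) = -b ∧ a * (u * v) = c := by
  obtain ⟨u, hu⟩ := exists_quadratic_eq_zero (b := b) (c := c) ha
    (IsAlgClosed.exists_eq_mul_self _)
  refine ⟨u, -b / a - u, by field_simp; ring, ?_⟩
  field_simp
  linear_combination -hu

theorem Complex.norm_mul_lt_one {l z : ℂ} (hl : ‖l‖ ≤ 1) (hz : ‖z‖ < 1) : ‖l * z‖ < 1 := by
  rw [norm_mul]
  nlinarith [norm_nonneg l, norm_nonneg z]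

theorem Complex.add_ne_zero_of_norm_lt_one {z : ℂ} (hz : ‖z‖ < 1) : 1 + z ≠ 0 := by
  intro h
  rw [eq_neg_of_add_eq_zero_right h, norm_neg, norm_one] at hz
  exact hz.false

theorem Complex.sub_ne_zero_of_norm_lt_one {z : ℂ} (hz : ‖z‖ < 1) : 1 - z ≠ 0 :=
  sub_ne_zero.2 fun h => by simp [← h] at hz

theorem Complex.norm_mul_add_norm_mul_le {l u v : ℂ} (huv : l * (u * v) = 1)
    (hu : 1 ≤ ‖u‖) (hv : 1 ≤ ‖v‖) : ‖l * u‖ + ‖l * v‖ ≤ 1 + ‖l‖ := by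
  have hprod : ‖l‖ * ‖u‖ * ‖v‖ = 1 := by
    rw [← norm_mul, ← norm_mul, mul_assoc, huv, norm_one]
  -- `‖u‖ ∈ [1, 1/‖l‖]`, and `t ↦ ‖l‖ t + 1/t` is maximal at the endpoints
  have hlu : ‖l‖ * ‖u‖ ≤ 1 := by nlinarith [norm_nonneg l, norm_nonneg u]
  rw [norm_mul, norm_mul]
  nlinarith [mul_nonneg (sub_nonneg.2 hu) (sub_nonneg.2 hlu), norm_nonneg l, norm_nonneg u,
    norm_nonneg v]

def twoPoleMap (α l z : ℂ) : ℂ := α * z / ((1 + z) * (1 + l * z))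

namespace twoPoleMap

variable {α l : ℂ}

theorem apply_zero : twoPoleMap α l 0 = 0 := by simp [twoPoleMap]

theorem apply_one : twoPoleMap α l 1 = α / (2 * (1 + l)) := by
  rw [twoPoleMap]; ring_nf

theorem den_one_ne_zero (hl' : l ≠ -1) : (1 + 1) * (1 + l * 1) ≠ 0 := by
  rw [one_add_one_eq_two, mul_one]
  exact mul_ne_zero two_ne_zero fun h => hl' (eq_neg_of_add_eq_zero_right h)

theorem den_ne_zero (hl : ‖l‖ ≤ 1) {z : ℂ} (hz : z ∈ unitDisk) : (1 + z) * (1 + l * z) ≠ 0 := by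
  rw [unitDisk, mem_ball_zero_iff] at hz
  exact mul_ne_zero (add_ne_zero_of_norm_lt_one hz)
    (add_ne_zero_of_norm_lt_one (norm_mul_lt_one hl hz))

theorem eq_iff (hl : ‖l‖ ≤ 1) {z : ℂ} (hz : z ∈ unitDisk) (w : ℂ) :
    twoPoleMap α l z = w ↔ α * z = w * ((1 + z) * (1 + l * z)) :=
  div_eq_iff (den_ne_zero hl hz)

theorem apply_eq_apply_iff (hα : α ≠ 0) {z w : ℂ} (hz : (1 + z) * (1 + l * z) ≠ 0)
    (hw : (1 + w) * (1 + l * w) ≠ 0) :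
    twoPoleMap α l z = twoPoleMap α l w ↔ (z - w) * (1 - l * z * w) = 0 := by
  rw [twoPoleMap, twoPoleMap, div_eq_div_iff hz hw]
  constructor
  · intro h
    have : α * ((z - w) * (1 - l * z * w)) = 0 := by linear_combination h
    exact (mul_eq_zero.1 this).resolve_left hα
  · intro h
    linear_combination α * h

theorem injOn (hα : α ≠ 0) (hl : ‖l‖ ≤ 1) : InjOn (twoPoleMap α l) unitDisk := by
  intro z hz w hw h
  have hzw : 1 - l * z * w ≠ 0 := by
    rw [unitDisk, mem_ball_zero_iff] at hz hw
    exact sub_ne_zero_of_norm_lt_one (norm_mul_lt_one (norm_mul_lt_one hl hz).le hw)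
  exact sub_eq_zero.1 <| (mul_eq_zero.1 <|
    (apply_eq_apply_iff hα (den_ne_zero hl hz) (den_ne_zero hl hw)).1 h).resolve_right hzw

theorem apply_one_notMem_image (hα : α ≠ 0) (hl : ‖l‖ ≤ 1) (hl' : l ≠ -1) :
    twoPoleMap α l 1 ∉ twoPoleMap α l '' unitDisk := by
  rintro ⟨z, hz, h⟩
  rcases mul_eq_zero.1 ((apply_eq_apply_iff hα (den_ne_zero hl hz) (den_one_ne_zero hl')).1 h)
    with h | h
  · rw [sub_eq_zero.1 h, unitDisk, mem_ball_zero_iff, norm_one] at hz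
    exact hz.false
  · rw [unitDisk, mem_ball_zero_iff] at hz
    exact sub_ne_zero_of_norm_lt_one (norm_mul_lt_one hl hz) (by rwa [mul_one] at h)

theorem apply_one_mem_closure_image (hl' : l ≠ -1) :
    twoPoleMap α l 1 ∈ closure (twoPoleMap α l '' unitDisk) := by
  have hcont : ContinuousAt (twoPoleMap α l) 1 :=
    ContinuousAt.div (by fun_prop) (by fun_prop) (den_one_ne_zero hl')
  refine hcont.continuousWithinAt.mem_closure_image ?_
  rw [unitDisk, closure_ball _ one_ne_zero]
  simp

theorem ball_subset_image (hl : ‖l‖ ≤ 1) (hl0 : l ≠ 0) :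
    ball 0 (‖α‖ / (‖1 + l‖ + (1 + ‖l‖))) ⊆ twoPoleMap α l '' unitDisk := by
  intro w hw
  rw [mem_ball_zero_iff, lt_div_iff₀ (by positivity)] at hw
  by_cases hw0 : w = 0
  · exact ⟨0, mem_ball_self one_pos, by rw [apply_zero, hw0]⟩
  obtain ⟨u, v, hsum, hprod⟩ :=
    exists_roots_sum_prod (b := (1 + l) * w - α) (c := w) (mul_ne_zero hl0 hw0)
  have huv : l * (u * v) = 1 := mul_left_cancel₀ hw0 (by linear_combination hprod)
  have hroot : ∀ z, z = u ∨ z = v → ‖z‖ < 1 → w ∈ twoPoleMap α l '' unitDisk := by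
    intro z hz hz1
    have hdisk : z ∈ unitDisk := mem_ball_zero_iff.2 hz1
    refine ⟨z, hdisk, (eq_iff hl hdisk w).2 ?_⟩
    rcases hz with rfl | rfl <;> linear_combination (-z) * hsum + hprod
  by_contra hw_img
  have hu : 1 ≤ ‖u‖ := not_lt.1 fun h => hw_img (hroot u (.inl rfl) h)
  have hv : 1 ≤ ‖v‖ := not_lt.1 fun h => hw_img (hroot v (.inr rfl) h)
  have hα : α = w * ((1 + l) + (l * u + l * v)) := by linear_combination -hsum
  have hbound : ‖α‖ ≤ ‖w‖ * (‖1 + l‖ + (1 + ‖l‖)) := by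
    rw [hα, norm_mul]
    gcongr
    refine (norm_add_le _ _).trans (add_le_add_right ?_ _)
    exact (norm_add_le _ _).trans (norm_mul_add_norm_mul_le huv hu hv)
  linarith

end twoPoleMap

/-- **Example (a).** For `λ ∈ (0,1]` and `α ≠ 0`,
`φ(z) = αz/((1+z)(1+λz))` is univalent on the unit disk and
`dist(φ(0), ∂φ(𝔻)) = |α|/(2(1+λ))`. -/
theorem example_a_univalent_dist
    (lam : ℝ) (hlam : lam ∈ Set.Ioc (0 : ℝ) 1) (α : ℂ) (hα : α ≠ 0)
    (φ : ℂ → ℂ)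
    (hφ : ∀ z : ℂ, φ z = α * z / ((1 + z) * (1 + (lam : ℂ) * z))) :
    Set.InjOn φ unitDisk ∧
    Metric.infDist (φ 0) (frontier (φ '' unitDisk)) = ‖α‖ / (2 * (1 + lam)) := by
  obtain ⟨hl0, hl1⟩ := hlam
  obtain rfl : φ = twoPoleMap α lam := funext hφ
  have hnorm : ‖(lam : ℂ)‖ = lam := Complex.norm_of_nonneg hl0.le
  have hnorm_add : ‖1 + (lam : ℂ)‖ = 1 + lam := by
    exact_mod_cast Complex.norm_of_nonneg (by linarith : (0 : ℝ) ≤ 1 + lam)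
  have hl : ‖(lam : ℂ)‖ ≤ 1 := hnorm.symm ▸ hl1
  have hl' : (lam : ℂ) ≠ -1 := by exact_mod_cast (show lam ≠ -1 by linarith)
  have hfrontier : twoPoleMap α lam 1 ∈ frontier (twoPoleMap α lam '' unitDisk) :=
    ⟨twoPoleMap.apply_one_mem_closure_image hl', fun h =>
      twoPoleMap.apply_one_notMem_image hα hl hl' (interior_subset h)⟩
  refine ⟨twoPoleMap.injOn hα hl, ?_⟩
  rw [twoPoleMap.apply_zero]
  refine infDist_frontier_eq_of_ball_subset ?_ hfrontier ?_
  · have := twoPoleMap.ball_subset_image (α := α) hl (by exact_mod_cast hl0.ne')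
    rwa [hnorm_add, hnorm, ← two_mul] at this
  · rw [dist_zero_left, twoPoleMap.apply_one, norm_div, norm_mul, hnorm_add, Complex.norm_two]
end
end

section
/- Let λ ∈ [0,1) and define φ(z) = z/(1 − 2λz + z²) for z ∈ 𝔻. Then φ is univalent (injective) on 𝔻, its image φ(𝔻) is the complement in ℂ of the two real rays (−∞, −1/(2(1+λ))] ∪ [1/(2(1−λ)), +∞), and dist(φ(0), ∂φ(𝔻)) = 1/(2(1+λ)). -/
/-! For `w ≠ 0`, `φ z = w` says exactly that `z` is a root of `z² - (2λ + 1/w) z + 1`, whose two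
roots have product `1`. So `w` is missed by `φ` on `𝔻` only if both roots lie on the unit circle,
i.e. they are conjugate and `2λ + 1/w` is a real number in `[-2, 2]`; solving for `w` gives the two
rays. Injectivity holds because `φ z = φ w` reduces to `(z - w)(1 - z w) = 0`. The rays are closed
with empty interior, hence form the boundary of the image, and since `λ ≥ 0` the boundary point
nearest to `φ 0 = 0` is `-1/(2(1+λ))`. -/

open Complex Metric Set

noncomputable section

open ComplexConjugate

lemma sq_sub_ofReal_mul_add_one_ne_zero {s : ℝ} (hs : |s| ≤ 2) {z : ℂ} (hz : ‖z‖ < 1) :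
    z ^ 2 - s * z + 1 ≠ 0 := by
  -- The roots are the conjugate pair `s/2 ± i√(1 - s²/4)` on the unit circle.
  set α : ℂ := ⟨s / 2, √(1 - (s / 2) ^ 2)⟩
  have hα : normSq α = 1 := by
    rw [normSq_mk, Real.mul_self_sqrt (by nlinarith [abs_le.mp hs])]; ring
  have hsum : α + conj α = s := by rw [add_conj, show α.re = s / 2 from rfl]; push_cast; ring
  have hprod : α * conj α = 1 := by rw [mul_conj, hα]; simp
  have hnorm : ‖α‖ = 1 := by rw [norm_def, hα, Real.sqrt_one]
  rw [show z ^ 2 - s * z + 1 = (z - α) * (z - conj α) by linear_combination z * hsum - hprod]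
  refine mul_ne_zero (sub_ne_zero.mpr ?_) (sub_ne_zero.mpr ?_) <;> rintro rfl <;> simp_all

lemma one_sub_two_mul_add_sq_ne_zero {lam : ℝ} (hlam : |lam| ≤ 1) {z : ℂ} (hz : z ∈ unitDisk) :
    1 - 2 * (lam : ℂ) * z + z ^ 2 ≠ 0 := by
  have h := sq_sub_ofReal_mul_add_one_ne_zero (s := 2 * lam)
    (by rw [abs_mul, abs_two]; linarith) (mem_ball_zero_iff.mp hz)
  contrapose! h
  push_cast
  linear_combination h

lemma exists_mem_unitDisk_sq_sub_mul_add_one_eq_zero {t : ℂ}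
    (ht : t ∉ ofReal '' Icc (-2) 2) : ∃ z ∈ unitDisk, z ^ 2 - t * z + 1 = 0 := by
  obtain ⟨s, hs⟩ := IsAlgClosed.exists_pow_nat_eq (t ^ 2 - 4) two_pos
  have hroot₁ : ((t + s) / 2) ^ 2 - t * ((t + s) / 2) + 1 = 0 := by linear_combination hs / 4
  have hroot₂ : ((t - s) / 2) ^ 2 - t * ((t - s) / 2) + 1 = 0 := by linear_combination hs / 4
  by_contra! hout
  have h₁ : 1 ≤ ‖(t + s) / 2‖ := not_lt.mp fun h ↦ hout _ (mem_ball_zero_iff.mpr h) hroot₁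
  have h₂ : 1 ≤ ‖(t - s) / 2‖ := not_lt.mp fun h ↦ hout _ (mem_ball_zero_iff.mpr h) hroot₂
  -- The roots have product `1`, so both lie on the unit circle and are conjugate.
  have hprod : (t + s) / 2 * ((t - s) / 2) = 1 := by linear_combination -hs / 4
  have hnorm₁ : ‖(t + s) / 2‖ = 1 := by
    have := congrArg norm hprod; rw [norm_mul, norm_one] at this; nlinarith
  have hconj : (t - s) / 2 = conj ((t + s) / 2) := by
    refine mul_left_cancel₀ (a := (t + s) / 2) (by rintro h; simp [h] at hnorm₁) ?_
    rw [hprod, mul_conj, normSq_eq_norm_sq, hnorm₁]; simp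
  have ht_eq : t = ((2 * ((t + s) / 2).re : ℝ) : ℂ) := by
    rw [← add_conj, ← hconj]; ring
  refine ht ⟨_, abs_le.mp ?_, ht_eq.symm⟩
  rw [abs_mul, abs_two]
  linarith [abs_re_le_norm ((t + s) / 2)]

lemma exists_mem_unitDisk_sq_sub_mul_add_one_eq_zero_iff (t : ℂ) :
    (∃ z ∈ unitDisk, z ^ 2 - t * z + 1 = 0) ↔ t ∉ ofReal '' Icc (-2) 2 := by
  refine ⟨?_, exists_mem_unitDisk_sq_sub_mul_add_one_eq_zero⟩
  rintro ⟨z, hz, hroot⟩ ⟨s, hs, rfl⟩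
  exact sq_sub_ofReal_mul_add_one_ne_zero (abs_le.mpr hs) (mem_ball_zero_iff.mp hz) hroot

lemma div_one_sub_mul_add_sq_eq_iff {c w : ℂ} (hw : w ≠ 0) (z : ℂ) :
    z / (1 - c * z + z ^ 2) = w ↔ z ^ 2 - (c + w⁻¹) * z + 1 = 0 := by
  rw [show z ^ 2 - (c + w⁻¹) * z + 1 = (1 - c * z + z ^ 2) - w⁻¹ * z by ring, sub_eq_zero]
  by_cases hD : 1 - c * z + z ^ 2 = 0
  · -- A vanishing denominator forces `z = 0`, where it equals `1`.
    rw [hD, div_zero, eq_comm, eq_comm (a := (0 : ℂ)), mul_eq_zero]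
    refine iff_of_false hw ?_
    rintro (h | rfl)
    · exact inv_ne_zero hw h
    · simp at hD
  · rw [div_eq_iff hD, eq_comm, eq_inv_mul_iff_mul_eq₀ hw]

lemma injOn_div_one_sub_mul_add_sq {c : ℂ} (hD : ∀ z ∈ unitDisk, 1 - c * z + z ^ 2 ≠ 0) :
    InjOn (fun z ↦ z / (1 - c * z + z ^ 2)) unitDisk := by
  intro z hz w hw hzw
  have hfactor : (z - w) * (1 - z * w) = 0 := by
    rw [div_eq_div_iff (hD z hz) (hD w hw)] at hzw
    linear_combination hzw
  have hzw_lt : ‖z * w‖ < 1 := by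
    rw [norm_mul]
    exact mul_lt_one_of_nonneg_of_lt_one_left (norm_nonneg z) (mem_ball_zero_iff.mp hz)
      (mem_ball_zero_iff.mp hw).le
  refine sub_eq_zero.mp ((mul_eq_zero.mp hfactor).resolve_right fun h ↦ ?_)
  rw [← sub_eq_zero.mp h, norm_one] at hzw_lt
  exact lt_irrefl 1 hzw_lt

lemma two_mul_add_inv_mem_Icc_iff {lam x : ℝ} (hlam : lam ∈ Ioo (-1) 1) (hx : x ≠ 0) :
    2 * lam + x⁻¹ ∈ Icc (-2) 2 ↔
      x ∈ Iic (-(1 / (2 * (1 + lam)))) ∪ Ici (1 / (2 * (1 - lam))) := by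
  have ha : 0 < 2 * (1 + lam) := by linarith [hlam.1]
  have hb : 0 < 2 * (1 - lam) := by linarith [hlam.2]
  simp only [mem_Icc, mem_union, mem_Iic, mem_Ici, one_div]
  rcases hx.lt_or_gt with hx | hx
  · have hxinv : x⁻¹ < 0 := inv_lt_zero.mpr hx
    have hnot : ¬(2 * (1 - lam))⁻¹ ≤ x := fun h ↦ by linarith [inv_pos.mpr hb]
    rw [or_iff_left hnot, ← inv_neg, le_inv_of_neg hx (by linarith)]
    exact ⟨fun h ↦ by linarith [h.1], fun h ↦ ⟨by linarith, by linarith⟩⟩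
  · have hxinv : 0 < x⁻¹ := inv_pos.mpr hx
    have hnot : ¬x ≤ -(2 * (1 + lam))⁻¹ := fun h ↦ by linarith [inv_pos.mpr ha]
    rw [or_iff_right hnot, inv_le_comm₀ hb hx]
    exact ⟨fun h ↦ by linarith [h.2], fun h ↦ ⟨by linarith, by linarith⟩⟩

lemma two_mul_add_inv_mem_ofReal_image_Icc_iff {lam : ℝ} (hlam : lam ∈ Ioo (-1) 1) {w : ℂ}
    (hw : w ≠ 0) :
    2 * (lam : ℂ) + w⁻¹ ∈ ofReal '' Icc (-2) 2 ↔
      w ∈ ofReal '' (Iic (-(1 / (2 * (1 + lam)))) ∪ Ici (1 / (2 * (1 - lam)))) := by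
  constructor
  · rintro ⟨s, hs, hsw⟩
    have hw_eq : w = ((s - 2 * lam)⁻¹ : ℝ) := by
      rw [ofReal_inv, ← inv_inv w]; push_cast; rw [hsw]; ring
    have hx : (s - 2 * lam)⁻¹ ≠ 0 := fun h ↦ hw (by rw [hw_eq, h, ofReal_zero])
    refine ⟨_, (two_mul_add_inv_mem_Icc_iff hlam hx).mp ?_, hw_eq.symm⟩
    rwa [inv_inv, add_sub_cancel]
  · rintro ⟨x, hx, rfl⟩
    have hx₀ : x ≠ 0 := fun h ↦ hw (by rw [h, ofReal_zero])
    exact ⟨_, (two_mul_add_inv_mem_Icc_iff hlam hx₀).mpr hx, by push_cast; rfl⟩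

lemma image_unitDisk_div_one_sub_two_mul_add_sq {lam : ℝ} (hlam : lam ∈ Ioo (-1) 1) :
    (fun z ↦ z / (1 - 2 * (lam : ℂ) * z + z ^ 2)) '' unitDisk =
      (ofReal '' (Iic (-(1 / (2 * (1 + lam)))) ∪ Ici (1 / (2 * (1 - lam)))))ᶜ := by
  ext w
  rcases eq_or_ne w 0 with rfl | hw
  · have h₀ : (0 : ℝ) ∉ Iic (-(1 / (2 * (1 + lam)))) ∪ Ici (1 / (2 * (1 - lam))) := by
      simp only [mem_union, mem_Iic, mem_Ici, not_or, not_le, Left.neg_neg_iff]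
      exact ⟨div_pos one_pos (by linarith [hlam.1]), div_pos one_pos (by linarith [hlam.2])⟩
    refine iff_of_true ⟨0, mem_ball_self one_pos, by simp⟩ ?_
    rintro ⟨x, hx, hx₀⟩
    exact h₀ (ofReal_eq_zero.mp hx₀ ▸ hx)
  · rw [mem_compl_iff, ← two_mul_add_inv_mem_ofReal_image_Icc_iff hlam hw,
      ← exists_mem_unitDisk_sq_sub_mul_add_one_eq_zero_iff]
    simp only [mem_image, div_one_sub_mul_add_sq_eq_iff hw]

lemma ofReal_image_eq_reProdIm (s : Set ℝ) : ofReal '' s = s ×ℂ {0} := by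
  ext z
  refine ⟨?_, fun ⟨hre, him⟩ ↦ ⟨z.re, hre, ext rfl (mem_singleton_iff.mp him).symm⟩⟩
  rintro ⟨x, hx, rfl⟩
  exact ⟨hx, ofReal_im x⟩

lemma frontier_ofReal_image {s : Set ℝ} (hs : IsClosed s) :
    frontier (ofReal '' s) = ofReal '' s := by
  have hclosed : IsClosed (ofReal '' s) := isometry_ofReal.isClosedEmbedding.isClosedMap _ hs
  rw [hclosed.frontier_eq, ofReal_image_eq_reProdIm, interior_reProdIm, interior_singleton]
  simp only [reProdIm, preimage_empty, inter_empty, sdiff_empty]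

lemma infDist_zero_Iic_union_Ici {a b : ℝ} (ha : a ≤ 0) (hb : 0 ≤ b) :
    infDist 0 (Iic a ∪ Ici b) = min (-a) b := by
  refine le_antisymm (le_min ?_ ?_) ((le_infDist ⟨a, Or.inl self_mem_Iic⟩).mpr ?_)
  · simpa [abs_of_nonpos ha] using
      infDist_le_dist_of_mem (x := 0) (mem_union_left (Ici b) (self_mem_Iic (a := a)))
  · simpa [abs_of_nonneg hb] using
      infDist_le_dist_of_mem (x := 0) (mem_union_right (Iic a) (self_mem_Ici (a := b)))
  · rintro y (hy | hy) <;> rw [Real.dist_eq]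
    · linarith [min_le_left (-a) b, le_abs_self (0 - y), mem_Iic.mp hy]
    · linarith [min_le_right (-a) b, neg_le_abs (0 - y), mem_Ici.mp hy]

/-- **Example (b).** For `λ ∈ [0,1)`, `φ(z) = z/(1-2λz+z²)` is
univalent on the unit disk, its image is the complement of the two real rays
`(-∞, -1/(2(1+λ))] ∪ [1/(2(1-λ)), ∞)`, and `dist(φ(0), ∂φ(𝔻)) = 1/(2(1+λ))`. -/
theorem example_b_univalent_image_dist
    (lam : ℝ) (hlam : lam ∈ Set.Ico (0 : ℝ) 1)
    (φ : ℂ → ℂ)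
    (hφ : ∀ z : ℂ, φ z = z / (1 - 2 * (lam : ℂ) * z + z ^ 2)) :
    Set.InjOn φ unitDisk ∧
    φ '' unitDisk =
      ((fun x : ℝ => (x : ℂ)) ''
        (Set.Iic (-(1 / (2 * (1 + lam)))) ∪ Set.Ici (1 / (2 * (1 - lam)))))ᶜ ∧
    Metric.infDist (φ 0) (frontier (φ '' unitDisk)) = 1 / (2 * (1 + lam)) := by
  obtain ⟨hl₀, hl₁⟩ := hlam
  have hφ₀ : φ 0 = ((0 : ℝ) : ℂ) := by simp [hφ]
  obtain rfl : φ = fun z ↦ z / (1 - 2 * (lam : ℂ) * z + z ^ 2) := funext hφ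
  have himage := image_unitDisk_div_one_sub_two_mul_add_sq (lam := lam) ⟨by linarith, hl₁⟩
  have hlam_abs : |lam| ≤ 1 := abs_le.mpr ⟨by linarith, hl₁.le⟩
  refine ⟨injOn_div_one_sub_mul_add_sq fun z ↦ one_sub_two_mul_add_sq_ne_zero hlam_abs, himage, ?_⟩
  have ha : 0 < 1 / (2 * (1 + lam)) := div_pos one_pos (by linarith)
  have hab : 1 / (2 * (1 + lam)) ≤ 1 / (2 * (1 - lam)) :=
    one_div_le_one_div_of_le (by linarith) (by linarith)
  rw [himage, frontier_compl, frontier_ofReal_image (isClosed_Iic.union isClosed_Ici), hφ₀,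
    infDist_image isometry_ofReal, infDist_zero_Iic_union_Ici (by linarith) (ha.le.trans hab),
    neg_neg, min_eq_left hab]
end
end

section
/- Let a ∈ ℝ \ {0} and c > 0, and define φ(z) = a(1+z)/(1−z) + 2(√(c²+a²) − a)·z/(1−z²) for z ∈ 𝔻. Then φ is univalent (injective) on 𝔻, its image φ(𝔻) is the complement in ℂ of the two vertical half-lines {w : Re w = 0 and |Im w| ≥ c}, φ(0) = a, and dist(φ(0), ∂φ(𝔻)) = √(c² + a²). -/
/-!
Put `b = √(c² + a²)` and `t = a / (b + c)`, so that `|t| < 1`. On the disk `φ = K ∘ M`, where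
`M z = (z + t) / (1 + t z)` is an automorphism of the disk and `K ζ = 2cζ / (1 - ζ²)`
(that is, `c sinh (2 artanh ζ)`). Since `K ζ₁ = K ζ₂` factors as `(ζ₁ - ζ₂)(1 + ζ₁ζ₂) = 0`, `K` is
injective on the disk. The equation `K ζ = w` is the quadratic `w ζ² + 2cζ - w = 0`, whose roots have
product `-1`: one of them lies in the disk unless both lie on the unit circle, and a root `ζ` on the
circle forces `w = i c / Im ζ`, a point of the slits `{Re w = 0, |Im w| ≥ c}`. The slits are closed
and nowhere dense, hence they are the boundary of `φ(𝔻)`, and their points nearest to `a` are `±ic`.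
-/

open Complex Metric Set

noncomputable section

lemma mem_unitDisk {z : ℂ} : z ∈ unitDisk ↔ ‖z‖ < 1 := mem_ball_zero_iff

lemma one_add_mul_ne_zero {z w : ℂ} (hz : z ∈ unitDisk) (hw : ‖w‖ ≤ 1) : 1 + z * w ≠ 0 := by
  intro h
  have hzw : ‖z‖ * ‖w‖ = 1 := by
    rw [← norm_mul, show z * w = -1 by linear_combination h, norm_neg, norm_one]
  nlinarith [mem_unitDisk.1 hz, norm_nonneg z, norm_nonneg w]

lemma one_sub_sq_ne_zero {z : ℂ} (hz : z ∈ unitDisk) : 1 - z ^ 2 ≠ 0 := by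
  have h := one_add_mul_ne_zero hz (w := -z) (by simpa using (mem_unitDisk.1 hz).le)
  exact fun h' => h (by linear_combination h')

lemma ofReal_mem_unitDisk {t : ℝ} (ht : |t| < 1) : (t : ℂ) ∈ unitDisk := by
  rwa [mem_unitDisk, norm_real, Real.norm_eq_abs]

def diskMobius (t : ℝ) (z : ℂ) : ℂ := (z + t) / (1 + t * z)

lemma normSq_one_add_mul_sub_normSq_add (t : ℝ) (z : ℂ) :
    normSq (1 + t * z) - normSq (z + t) = (1 - t ^ 2) * (1 - normSq z) := by
  simp only [normSq_apply, add_re, add_im, mul_re, mul_im, ofReal_re, ofReal_im, one_re, one_im]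
  ring

lemma mapsTo_diskMobius {t : ℝ} (ht : |t| < 1) : MapsTo (diskMobius t) unitDisk unitDisk := by
  intro z hz
  have hden := one_add_mul_ne_zero (ofReal_mem_unitDisk ht) (mem_unitDisk.1 hz).le
  have hz' : normSq z < 1 := by
    rw [← Complex.sq_norm]; nlinarith [mem_unitDisk.1 hz, norm_nonneg z]
  have ht' : t ^ 2 < 1 := by nlinarith [sq_abs t, abs_nonneg t]
  rw [mem_unitDisk, diskMobius, norm_div, div_lt_one (norm_pos_iff.2 hden),
    ← sq_lt_sq₀ (norm_nonneg _) (norm_nonneg _), Complex.sq_norm, Complex.sq_norm]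
  nlinarith [normSq_one_add_mul_sub_normSq_add t z, mul_pos (sub_pos.2 ht') (sub_pos.2 hz')]

lemma diskMobius_neg_diskMobius {t : ℝ} (ht : |t| < 1) {z : ℂ} (hz : z ∈ unitDisk) :
    diskMobius (-t) (diskMobius t z) = z := by
  have hden := one_add_mul_ne_zero (ofReal_mem_unitDisk ht) (mem_unitDisk.1 hz).le
  have ht2 : (1 : ℂ) - t ^ 2 ≠ 0 := by
    simpa using one_sub_sq_ne_zero (ofReal_mem_unitDisk ht)
  have hnum : diskMobius t z + (-t : ℝ) = z * (1 - t ^ 2) / (1 + t * z) := by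
    rw [diskMobius, div_add' _ _ _ hden]; push_cast; ring
  have hdenom : 1 + (-t : ℝ) * diskMobius t z = (1 - t ^ 2) / (1 + t * z) := by
    rw [diskMobius, mul_div_assoc', add_div' _ _ _ hden]; push_cast; ring
  rw [diskMobius, hnum, hdenom, div_div_div_cancel_right₀ hden, mul_div_cancel_right₀ _ ht2]

lemma bijOn_diskMobius {t : ℝ} (ht : |t| < 1) : BijOn (diskMobius t) unitDisk unitDisk := by
  have ht' : |-t| < 1 := by rwa [abs_neg]
  refine InvOn.bijOn ⟨fun z hz => diskMobius_neg_diskMobius ht hz, fun z hz => ?_⟩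
    (mapsTo_diskMobius ht) (mapsTo_diskMobius ht')
  simpa using diskMobius_neg_diskMobius ht' hz

lemma one_sub_diskMobius_sq (t : ℝ) {z : ℂ} (hden : 1 + t * z ≠ 0) :
    1 - diskMobius t z ^ 2 = (1 - t ^ 2) * (1 - z ^ 2) / (1 + t * z) ^ 2 := by
  rw [diskMobius, div_pow, eq_div_iff (pow_ne_zero 2 hden), sub_mul,
    div_mul_cancel₀ _ (pow_ne_zero 2 hden)]
  ring

def twoSlitMap (c : ℝ) (ζ : ℂ) : ℂ := 2 * c * ζ / (1 - ζ ^ 2)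

def verticalSlits (c : ℝ) : Set ℂ := {w | w.re = 0 ∧ c ≤ |w.im|}

lemma twoSlitMap_eq_iff {c : ℝ} {ζ w : ℂ} (hζ : 1 - ζ ^ 2 ≠ 0) :
    twoSlitMap c ζ = w ↔ w * ζ ^ 2 + 2 * c * ζ - w = 0 := by
  rw [twoSlitMap, div_eq_iff hζ]
  constructor <;> intro h <;> linear_combination h

lemma injOn_twoSlitMap {c : ℝ} (hc : c ≠ 0) : InjOn (twoSlitMap c) unitDisk := by
  intro z₁ h₁ z₂ h₂ h
  have h₁₂ := one_add_mul_ne_zero h₁ (mem_unitDisk.1 h₂).le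
  rw [twoSlitMap, twoSlitMap, div_eq_div_iff (one_sub_sq_ne_zero h₁) (one_sub_sq_ne_zero h₂)] at h
  have hfac : (2 * c * (1 + z₁ * z₂)) * (z₁ - z₂) = 0 := by linear_combination h
  rcases mul_eq_zero.1 hfac with h | h
  · exact absurd h (mul_ne_zero (mul_ne_zero two_ne_zero (ofReal_ne_zero.2 hc)) h₁₂)
  · exact sub_eq_zero.1 h

lemma twoSlitMap_notMem_verticalSlits {c : ℝ} (hc : 0 < c) {ζ : ℂ} (hζ : ζ ∈ unitDisk) :
    twoSlitMap c ζ ∉ verticalSlits c := by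
  rintro ⟨hre, him⟩
  have hq := (twoSlitMap_eq_iff (c := c) (one_sub_sq_ne_zero hζ)).1 rfl
  set w := twoSlitMap c ζ
  have hnorm : ζ.re ^ 2 + ζ.im ^ 2 < 1 := by
    have := mem_unitDisk.1 hζ
    rw [← normSq_add_mul_I, re_add_im, ← Complex.sq_norm]
    nlinarith [norm_nonneg ζ]
  have hq_re := congrArg re hq
  have hq_im := congrArg im hq
  simp only [sub_re, add_re, mul_re, sub_im, add_im, mul_im, pow_two, hre, ofReal_re, ofReal_im,
    re_ofNat, im_ofNat, zero_re, zero_im] at hq_re hq_im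
  set x := ζ.re
  set η := ζ.im
  set y := w.im
  have hfac : x * (c - η * y) = 0 := by linear_combination hq_re / 2
  rcases mul_eq_zero.1 hfac with hx | hηy
  · have hy : y * (1 + η ^ 2) = 2 * c * η := by linear_combination -hq_im + y * x * hx
    have hy2 : c ^ 2 ≤ y ^ 2 := by nlinarith [sq_abs y, abs_nonneg y]
    have hη : 0 < (1 - η ^ 2) ^ 2 := pow_pos (by nlinarith) 2
    nlinarith [congrArg (· ^ 2) hy, mul_le_mul_of_nonneg_right hy2 (sq_nonneg (1 + η ^ 2)),
      mul_pos (mul_pos hc hc) hη]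
  · have : c * (x ^ 2 + η ^ 2 - 1) = 0 := by
      linear_combination η * hq_im + (x ^ 2 - η ^ 2 - 1) * hηy
    nlinarith

lemma mem_verticalSlits_of_quadratic_root {c : ℝ} (hc : 0 < c) {ζ w : ℂ} (hζ : ‖ζ‖ = 1)
    (h : w * ζ ^ 2 + 2 * c * ζ - w = 0) : w ∈ verticalSlits c := by
  have hnorm : ζ.re ^ 2 + ζ.im ^ 2 = 1 := by
    rw [← normSq_add_mul_I, re_add_im, ← Complex.sq_norm, hζ, one_pow]
  have hq_re := congrArg re h
  have hq_im := congrArg im h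
  simp only [sub_re, add_re, mul_re, sub_im, add_im, mul_im, pow_two, ofReal_re, ofReal_im,
    re_ofNat, im_ofNat, zero_re, zero_im] at hq_re hq_im
  set x := ζ.re
  set η := ζ.im
  have hvη : w.im * η = c := by
    linear_combination (-(x * hq_re + η * hq_im) + (w.re * x - w.im * η + 2 * c) * hnorm) / 2
  have huη : w.re * η = 0 := by
    linear_combination (-(η * hq_re - x * hq_im) - (w.im * x + w.re * η) * hnorm) / 2
  have hη : η ≠ 0 := by rintro hη; rw [hη, mul_zero] at hvη; exact hc.ne hvη
  refine ⟨(mul_eq_zero.1 huη).resolve_right hη, ?_⟩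
  have : |w.im| * |η| = c := by rw [← abs_mul, hvη, abs_of_pos hc]
  nlinarith [sq_abs η, abs_nonneg η, abs_nonneg w.im]

lemma exists_mem_unitDisk_twoSlitMap_eq {c : ℝ} (hc : 0 < c) {w : ℂ} (hw : w ∉ verticalSlits c) :
    ∃ ζ ∈ unitDisk, twoSlitMap c ζ = w := by
  by_cases hw0 : w = 0
  · exact ⟨0, mem_ball_self one_pos, by simp [twoSlitMap, hw0]⟩
  obtain ⟨s, hs⟩ := IsAlgClosed.exists_pow_nat_eq ((c : ℂ) ^ 2 + w ^ 2) two_pos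
  have hroot : ∀ σ : ℂ, σ ^ 2 = (c : ℂ) ^ 2 + w ^ 2 →
      w * ((-c + σ) / w) ^ 2 + 2 * c * ((-c + σ) / w) - w = 0 := by
    intro σ hσ
    field_simp
    linear_combination hσ
  suffices ∃ ζ ∈ unitDisk, w * ζ ^ 2 + 2 * c * ζ - w = 0 by
    obtain ⟨ζ, hζ, hq⟩ := this
    exact ⟨ζ, hζ, (twoSlitMap_eq_iff (one_sub_sq_ne_zero hζ)).2 hq⟩
  have hprod : ‖(-c + s) / w‖ * ‖(-c + -s) / w‖ = 1 := by
    rw [← norm_mul, show (-c + s) / w * ((-c + -s) / w) = -1 by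
      field_simp; linear_combination -hs, norm_neg, norm_one]
  rcases lt_or_ge ‖(-c + s) / w‖ 1 with h₁ | h₁
  · exact ⟨_, mem_unitDisk.2 h₁, hroot s hs⟩
  rcases lt_or_ge ‖(-c + -s) / w‖ 1 with h₂ | h₂
  · exact ⟨_, mem_unitDisk.2 h₂, hroot (-s) (by rw [neg_sq, hs])⟩
  exact absurd (mem_verticalSlits_of_quadratic_root hc (by nlinarith) (hroot s hs)) hw

lemma image_twoSlitMap {c : ℝ} (hc : 0 < c) : twoSlitMap c '' unitDisk = (verticalSlits c)ᶜ :=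
  Subset.antisymm (image_subset_iff.2 fun _ hζ => twoSlitMap_notMem_verticalSlits hc hζ)
    fun _ hw => exists_mem_unitDisk_twoSlitMap_eq hc hw

lemma frontier_compl_verticalSlits (c : ℝ) : frontier (verticalSlits c)ᶜ = verticalSlits c := by
  have hclosed : IsClosed (verticalSlits c) :=
    (isClosed_eq continuous_re continuous_const).inter
      (isClosed_le continuous_const (continuous_abs.comp continuous_im))
  have hinterior : interior (verticalSlits c) = ∅ :=
    subset_empty_iff.1 <| calc
      interior (verticalSlits c) ⊆ interior (re ⁻¹' {0}) := interior_mono fun _ hw => hw.1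
      _ = ∅ := by rw [interior_preimage_re, interior_singleton, preimage_empty]
  rw [frontier_compl, hclosed.frontier_eq, hinterior, sdiff_empty]

lemma infDist_ofReal_verticalSlits (x : ℝ) {c : ℝ} (hc : 0 ≤ c) :
    infDist (x : ℂ) (verticalSlits c) = √(c ^ 2 + x ^ 2) := by
  have hdist : ∀ w ∈ verticalSlits c, dist (x : ℂ) w = √(w.im ^ 2 + x ^ 2) := by
    intro w hw
    rw [dist_eq, norm_def, normSq_apply]
    congr 1
    simp only [sub_re, sub_im, ofReal_re, ofReal_im, hw.1]
    ring
  have hcI : (c * I : ℂ) ∈ verticalSlits c := ⟨by simp, by simp [abs_of_nonneg hc]⟩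
  refine le_antisymm ((infDist_le_dist_of_mem hcI).trans_eq (by rw [hdist _ hcI]; simp)) ?_
  refine (le_infDist ⟨_, hcI⟩).2 fun w hw => (hdist w hw).symm ▸ Real.sqrt_le_sqrt ?_
  nlinarith [sq_abs w.im, hw.2]

lemma abs_div_add_lt_one {a b c : ℝ} (hc : 0 < c) (hb : 0 ≤ b) (h : b ^ 2 = c ^ 2 + a ^ 2) :
    |a / (b + c)| < 1 := by
  rw [abs_div, abs_of_pos (by positivity : 0 < b + c), div_lt_one (by positivity),
    ← sq_lt_sq₀ (abs_nonneg a) (by positivity), sq_abs]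
  nlinarith

lemma twoSlitMap_diskMobius_mul (c : ℝ) {t : ℝ} (ht : |t| < 1) {z : ℂ} (hz : z ∈ unitDisk) :
    twoSlitMap c (diskMobius t z) * ((1 - t ^ 2) * (1 - z ^ 2)) =
      2 * c * (z + t) * (1 + t * z) := by
  have hden := one_add_mul_ne_zero (ofReal_mem_unitDisk ht) (mem_unitDisk.1 hz).le
  have ht2 : (1 : ℂ) - t ^ 2 ≠ 0 := by simpa using one_sub_sq_ne_zero (ofReal_mem_unitDisk ht)
  have hz2 := one_sub_sq_ne_zero hz
  rw [twoSlitMap, one_sub_diskMobius_sq t hden, diskMobius]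
  field_simp

lemma twoSlitMap_diskMobius {a b c : ℝ} (hc : 0 < c) (hb : 0 ≤ b) (h : b ^ 2 = c ^ 2 + a ^ 2)
    {z : ℂ} (hz : z ∈ unitDisk) :
    twoSlitMap c (diskMobius (a / (b + c)) z) =
      a * (1 + z) / (1 - z) + 2 * (b - a) * z / (1 - z ^ 2) := by
  set t := a / (b + c) with ht_def
  have ht : |t| < 1 := abs_div_add_lt_one hc hb h
  have ha : (a : ℂ) * (1 - t ^ 2) = 2 * c * t := by
    norm_cast; rw [ht_def]; field_simp; linear_combination a * h
  have hb : (b : ℂ) * (1 - t ^ 2) = c * (1 + t ^ 2) := by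
    norm_cast; rw [ht_def]; field_simp; linear_combination (b + c) * h
  have ht2 : (1 : ℂ) - t ^ 2 ≠ 0 := by simpa using one_sub_sq_ne_zero (ofReal_mem_unitDisk ht)
  have h1 : 1 - z ≠ 0 := by
    simpa [← sub_eq_add_neg] using one_add_mul_ne_zero hz (w := -1) (by simp)
  have hM := twoSlitMap_diskMobius_mul c ht hz
  have h2 := one_sub_sq_ne_zero hz
  rw [div_add_div _ _ h1 h2, eq_div_iff (mul_ne_zero h1 h2)]
  refine mul_left_cancel₀ ht2 ?_
  linear_combination (1 - z) * hM - (1 - z) * (1 + z ^ 2) * ha - 2 * z * (1 - z) * hb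

theorem example_c_univalent_image_dist_general
    (a c : ℝ) (hc : 0 < c)
    (φ : ℂ → ℂ)
    (hφ : ∀ z : ℂ, φ z = (a : ℂ) * (1 + z) / (1 - z) +
      2 * ((Real.sqrt (c ^ 2 + a ^ 2) : ℂ) - (a : ℂ)) * z / (1 - z ^ 2)) :
    Set.InjOn φ unitDisk ∧
    φ '' unitDisk = {w : ℂ | w.re = 0 ∧ c ≤ |w.im|}ᶜ ∧
    φ 0 = (a : ℂ) ∧
    Metric.infDist (φ 0) (frontier (φ '' unitDisk)) = Real.sqrt (c ^ 2 + a ^ 2) := by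
  set b := √(c ^ 2 + a ^ 2)
  have hb : b ^ 2 = c ^ 2 + a ^ 2 := Real.sq_sqrt (by positivity)
  have hM : BijOn (diskMobius (a / (b + c))) unitDisk unitDisk :=
    bijOn_diskMobius (abs_div_add_lt_one hc (Real.sqrt_nonneg _) hb)
  have hφ_eq : EqOn (twoSlitMap c ∘ diskMobius (a / (b + c))) φ unitDisk := fun z hz =>
    (twoSlitMap_diskMobius hc (Real.sqrt_nonneg _) hb hz).trans (hφ z).symm
  have himage : φ '' unitDisk = (verticalSlits c)ᶜ := by
    rw [← hφ_eq.image_eq, image_comp, hM.image_eq, image_twoSlitMap hc]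
  have hφ0 : φ 0 = a := by simp [hφ]
  refine ⟨((injOn_twoSlitMap hc.ne').comp hM.injOn hM.mapsTo).congr hφ_eq, himage, hφ0, ?_⟩
  rw [himage, frontier_compl_verticalSlits, hφ0, infDist_ofReal_verticalSlits a hc.le]

/-- **Example (c).** For `a ∈ ℝ \ {0}` and `c > 0`, the map
`φ(z) = a(1+z)/(1-z) + 2(√(c²+a²) - a)z/(1-z²)` is univalent on the unit
disk, its image is the complement of the two vertical half-lines
`{w : Re w = 0, |Im w| ≥ c}`, `φ(0) = a`, and
`dist(φ(0), ∂φ(𝔻)) = √(c²+a²)`. -/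
theorem example_c_univalent_image_dist
    (a c : ℝ) (ha : a ≠ 0) (hc : 0 < c)
    (φ : ℂ → ℂ)
    (hφ : ∀ z : ℂ, φ z = (a : ℂ) * (1 + z) / (1 - z) +
      2 * ((Real.sqrt (c ^ 2 + a ^ 2) : ℂ) - (a : ℂ)) * z / (1 - z ^ 2)) :
    Set.InjOn φ unitDisk ∧
    φ '' unitDisk = {w : ℂ | w.re = 0 ∧ c ≤ |w.im|}ᶜ ∧
    φ 0 = (a : ℂ) ∧
    Metric.infDist (φ 0) (frontier (φ '' unitDisk)) = Real.sqrt (c ^ 2 + a ^ 2) :=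
  example_c_univalent_image_dist_general a c hc φ hφ
end
end

section
/- Let λ ∈ [0,1) and define φ(z) = (z − λz²)/(1−z)² for z ∈ 𝔻. Then φ is univalent (injective) on 𝔻, its image is φ(𝔻) = {(ζ² − 1)/(4(1−λ)) : Re ζ > λ}, and the Euclidean distance from 0 = φ(0) to the boundary of φ(𝔻) equals (1+λ)/4. -/
open Complex Metric Set

noncomputable section

/-- Forward computation: for `z` in the disk, with
`ζ(z) = (1-λ)(1+z)/(1-z) + λ`, we have `Re ζ(z) > λ` and
`φ(z) = (ζ(z)² - 1)/(4(1-λ))`. -/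
lemma zeta_key (lam : ℝ) (h0 : 0 ≤ lam) (h1 : lam < 1) (z : ℂ) (hz : ‖z‖ < 1) :
    lam < ((1 - (lam : ℂ)) * ((1 + z) / (1 - z)) + (lam : ℂ)).re ∧
    (z - (lam : ℂ) * z ^ 2) / (1 - z) ^ 2 =
      (((1 - (lam : ℂ)) * ((1 + z) / (1 - z)) + (lam : ℂ)) ^ 2 - 1) /
        (4 * (1 - (lam : ℂ))) := by
  have hz1 : (1 : ℂ) - z ≠ 0 := by
    intro h
    have : z = 1 := by linear_combination -h
    rw [this] at hz; simp at hz
  have hL : (1 : ℂ) - (lam : ℂ) ≠ 0 := by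
    intro h
    have := congrArg Complex.re h
    simp at this; linarith
  have hnsq : Complex.normSq z < 1 := by
    rw [← Complex.sq_norm]
    have : ‖z‖ < 1 := hz
    nlinarith [norm_nonneg z]
  have hure : 0 < ((1 + z) / (1 - z)).re := by
    rw [Complex.div_re]
    have hd : 0 < Complex.normSq (1 - z) := Complex.normSq_pos.mpr hz1
    rw [← add_div]
    apply div_pos _ hd
    simp [Complex.add_re, Complex.add_im, Complex.sub_re, Complex.sub_im]
    rw [Complex.normSq_apply] at hnsq
    nlinarith
  constructor
  · have : ((1 - (lam : ℂ)) * ((1 + z) / (1 - z)) + (lam : ℂ)).re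
        = (1 - lam) * ((1 + z) / (1 - z)).re + lam := by
      simp [Complex.add_re, Complex.mul_re, Complex.sub_re, Complex.sub_im]
    rw [this]
    nlinarith
  · field_simp
    ring

/-- If `ζ² = s` then `|s| + Re s = 2 (Re ζ)²`. -/
lemma abs_add_re_sq (ζ : ℂ) :
    ‖ζ ^ 2‖ + (ζ ^ 2).re = 2 * ζ.re ^ 2 := by
  have h1 : ‖ζ ^ 2‖ = ζ.re ^ 2 + ζ.im ^ 2 := by
    rw [norm_pow, Complex.sq_norm, Complex.normSq_apply]; ring
  have h2 : (ζ ^ 2).re = ζ.re ^ 2 - ζ.im ^ 2 := by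
    rw [pow_two, Complex.mul_re]; ring
  rw [h1, h2]; ring

set_option maxHeartbeats 1000000 in
/-- **Example (d).** For `λ ∈ [0,1)`, the map
`φ(z) = (z - λz²)/(1-z)²` is univalent on the unit disk, its image is the
parabolic region `{(ζ² - 1)/(4(1-λ)) : Re ζ > λ}`, and the distance from
`0 = φ(0)` to the boundary of the image equals `(1+λ)/4`. -/
theorem example_d_univalent_image_dist
    (lam : ℝ) (hlam : lam ∈ Set.Ico (0 : ℝ) 1)
    (φ : ℂ → ℂ)
    (hφ : ∀ z : ℂ, φ z = (z - (lam : ℂ) * z ^ 2) / (1 - z) ^ 2) :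
    Set.InjOn φ unitDisk ∧
    φ '' unitDisk =
      {w : ℂ | ∃ ζ : ℂ, lam < ζ.re ∧ w = (ζ ^ 2 - 1) / (4 * (1 - (lam : ℂ)))} ∧
    Metric.infDist (φ 0) (frontier (φ '' unitDisk)) = (1 + lam) / 4 := by
  obtain ⟨h0, h1⟩ := hlam
  have hL : (1 : ℂ) - (lam : ℂ) ≠ 0 := by
    intro h
    have := congrArg Complex.re h
    simp at this; linarith
  have h4L : (4 : ℂ) * (1 - (lam : ℂ)) ≠ 0 := by
    exact mul_ne_zero (by norm_num) hL
  have hmem : ∀ z : ℂ, z ∈ unitDisk ↔ ‖z‖ < 1 := by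
    intro z; simp [unitDisk, mem_ball_zero_iff]
  -- Part 1: injectivity
  have hinj : Set.InjOn φ unitDisk := by
    intro z₁ hz₁ z₂ hz₂ h
    rw [hmem] at hz₁ hz₂
    obtain ⟨hre₁, heq₁⟩ := zeta_key lam h0 h1 z₁ hz₁
    obtain ⟨hre₂, heq₂⟩ := zeta_key lam h0 h1 z₂ hz₂
    set ζ₁ := (1 - (lam : ℂ)) * ((1 + z₁) / (1 - z₁)) + (lam : ℂ) with hζ₁
    set ζ₂ := (1 - (lam : ℂ)) * ((1 + z₂) / (1 - z₂)) + (lam : ℂ) with hζ₂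
    rw [hφ, hφ, heq₁, heq₂] at h
    have hsq : ζ₁ ^ 2 = ζ₂ ^ 2 := by
      rw [div_eq_div_iff h4L h4L] at h
      have := mul_right_cancel₀ h4L h
      linear_combination this
    have hfac : (ζ₁ - ζ₂) * (ζ₁ + ζ₂) = 0 := by linear_combination hsq
    rcases mul_eq_zero.mp hfac with hc | hc
    · -- ζ₁ = ζ₂  ⟹  z₁ = z₂
      have hζ : ζ₁ = ζ₂ := by linear_combination hc
      have hu : (1 + z₁) / (1 - z₁) = (1 + z₂) / (1 - z₂) := by
        have h' : (1 - (lam : ℂ)) * ((1 + z₁) / (1 - z₁))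
            = (1 - (lam : ℂ)) * ((1 + z₂) / (1 - z₂)) := by
          have := hζ
          rw [hζ₁, hζ₂] at this
          linear_combination this
        exact mul_left_cancel₀ hL h'
      have hz1 : (1 : ℂ) - z₁ ≠ 0 := by
        intro hh
        have : z₁ = 1 := by linear_combination -hh
        rw [this] at hz₁; simp at hz₁
      have hz2 : (1 : ℂ) - z₂ ≠ 0 := by
        intro hh
        have : z₂ = 1 := by linear_combination -hh
        rw [this] at hz₂; simp at hz₂
      rw [div_eq_div_iff hz1 hz2] at hu
      linear_combination hu / 2
    · -- ζ₁ = -ζ₂ impossible since both have Re > λ ≥ 0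
      exfalso
      have := congrArg Complex.re hc
      simp [Complex.add_re] at this
      linarith
  refine ⟨hinj, ?_⟩
  -- Part 2: image
  have himg : φ '' unitDisk =
      {w : ℂ | ∃ ζ : ℂ, lam < ζ.re ∧ w = (ζ ^ 2 - 1) / (4 * (1 - (lam : ℂ)))} := by
    ext w
    constructor
    · rintro ⟨z, hz, rfl⟩
      rw [hmem] at hz
      obtain ⟨hre, heq⟩ := zeta_key lam h0 h1 z hz
      exact ⟨_, hre, by rw [hφ]; exact heq⟩
    · rintro ⟨ζ, hre, rfl⟩
      obtain ⟨u, hu⟩ : ∃ u : ℂ, u = (ζ - (lam : ℂ)) / (1 - (lam : ℂ)) := ⟨_, rfl⟩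
      have hure : 0 < u.re := by
        have : u = (ζ - (lam : ℂ)) / ((1 - lam : ℝ) : ℂ) := by push_cast [hu]; ring_nf
        rw [this, Complex.div_ofReal_re]
        have : (ζ - (lam : ℂ)).re = ζ.re - lam := by simp
        rw [this]
        apply div_pos (by linarith) (by linarith)
      have hu1 : u + 1 ≠ 0 := by
        intro hh
        have := congrArg Complex.re hh
        simp at this; linarith
      obtain ⟨z, hzdef⟩ : ∃ z : ℂ, z = (u - 1) / (u + 1) := ⟨_, rfl⟩
      have hudiv : ‖u - 1‖ < ‖u + 1‖ := by
        have e1 : (‖u - 1‖) ^ 2 = Complex.normSq (u - 1) := Complex.sq_norm _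
        have e2 : (‖u + 1‖) ^ 2 = Complex.normSq (u + 1) := Complex.sq_norm _
        have e3 : Complex.normSq (u - 1) < Complex.normSq (u + 1) := by
          simp [Complex.normSq_apply, Complex.sub_re, Complex.sub_im,
            Complex.add_re, Complex.add_im]
          nlinarith
        nlinarith [norm_nonneg (u - 1), norm_nonneg (u + 1)]
      have hz : ‖z‖ < 1 := by
        rw [hzdef, norm_div]
        rw [div_lt_one (lt_of_le_of_lt (norm_nonneg _) hudiv)]
        exact hudiv
      have hz1 : (1 : ℂ) - z ≠ 0 := by
        intro hh
        have : z = 1 := by linear_combination -hh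
        rw [this] at hz; simp at hz
      have huz : (1 + z) / (1 - z) = u := by
        rw [div_eq_iff hz1, hzdef]
        field_simp
        ring
      have hζz : (1 - (lam : ℂ)) * ((1 + z) / (1 - z)) + (lam : ℂ) = ζ := by
        rw [huz, hu]
        field_simp
        ring
      obtain ⟨_, heq⟩ := zeta_key lam h0 h1 z hz
      refine ⟨z, (hmem z).mpr hz, ?_⟩
      rw [hφ, heq, hζz]
  refine ⟨himg, ?_⟩
  -- Part 3: distance
  rw [himg]
  set f : ℂ → ℝ := fun w => ‖4 * (1 - (lam : ℂ)) * w + 1‖ + (4 * (1 - (lam : ℂ)) * w + 1).re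
    with hfdef
  have hfcont : Continuous f := by
    apply Continuous.add
    · exact continuous_norm.comp (by continuity)
    · exact Complex.continuous_re.comp (by continuity)
  have hSf : {w : ℂ | ∃ ζ : ℂ, lam < ζ.re ∧ w = (ζ ^ 2 - 1) / (4 * (1 - (lam : ℂ)))}
      = {w : ℂ | 2 * lam ^ 2 < f w} := by
    ext w
    constructor
    · rintro ⟨ζ, hre, rfl⟩
      have hs : 4 * (1 - (lam : ℂ)) * ((ζ ^ 2 - 1) / (4 * (1 - (lam : ℂ)))) + 1 = ζ ^ 2 := by
        field_simp
        ring
      show 2 * lam ^ 2 < f _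
      rw [hfdef]
      simp only
      rw [hs, abs_add_re_sq]
      nlinarith
    · intro hw
      obtain ⟨ζ₀, hζ₀⟩ :=
        IsAlgClosed.exists_pow_nat_eq (4 * (1 - (lam : ℂ)) * w + 1) (zero_lt_two)
      have hkey : ‖ζ₀ ^ 2‖ + (ζ₀ ^ 2).re = 2 * ζ₀.re ^ 2 :=
        abs_add_re_sq ζ₀
      have hw' : 2 * lam ^ 2 < 2 * ζ₀.re ^ 2 := by
        rw [← hkey, hζ₀]; exact hw
      have hre2 : lam ^ 2 < ζ₀.re ^ 2 := by linarith
      rcases le_or_gt 0 ζ₀.re with hc | hc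
      · refine ⟨ζ₀, by nlinarith, ?_⟩
        rw [eq_div_iff h4L]; linear_combination -hζ₀
      · refine ⟨-ζ₀, by simp; nlinarith, ?_⟩
        rw [eq_div_iff h4L]
        have : (-ζ₀) ^ 2 = ζ₀ ^ 2 := by ring
        rw [this]; linear_combination -hζ₀
  rw [hSf]
  set Ω : Set ℂ := {w : ℂ | 2 * lam ^ 2 < f w} with hΩdef
  have hopen : IsOpen Ω := isOpen_lt continuous_const hfcont
  -- frontier points satisfy f w = 2 λ²
  have hfr : frontier Ω ⊆ {w : ℂ | f w = 2 * lam ^ 2} := by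
    intro w hw
    have hcl : w ∈ closure Ω := hw.1
    have hni : w ∉ Ω := by
      rw [hopen.frontier_eq] at hw; exact hw.2
    have hle : 2 * lam ^ 2 ≤ f w := by
      have hsub : closure Ω ⊆ {w : ℂ | 2 * lam ^ 2 ≤ f w} := by
        apply closure_minimal _ (isClosed_le continuous_const hfcont)
        exact fun x hx => le_of_lt (show 2 * lam ^ 2 < f x from hx)
      exact hsub hcl
    have hge : f w ≤ 2 * lam ^ 2 := not_lt.mp hni
    exact le_antisymm hge hle
  -- φ 0 = 0
  have hφ0 : φ 0 = 0 := by rw [hφ]; simp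
  -- lower bound for distance to any frontier point
  have hlow : ∀ w ∈ frontier Ω, (1 + lam) / 4 ≤ dist (φ 0) w := by
    intro w hw
    have hfw : f w = 2 * lam ^ 2 := hfr hw
    set s : ℂ := 4 * (1 - (lam : ℂ)) * w + 1 with hsdef
    have ha : s.re ≤ ‖s‖ :=
      le_trans (le_abs_self _) (Complex.abs_re_le_norm s)
    have hfw' : ‖s‖ + s.re = 2 * lam ^ 2 := hfw
    have halam : s.re ≤ lam ^ 2 := by linarith
    have hsub1 : s - 1 = ((4 * (1 - lam) : ℝ) : ℂ) * w := by
      rw [hsdef]; push_cast; ring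
    have habs : ‖s - 1‖ = 4 * (1 - lam) * ‖w‖ := by
      rw [hsub1, norm_mul, Complex.norm_real, Real.norm_eq_abs, abs_of_pos (by linarith)]
    have hnormsq : (‖s - 1‖) ^ 2 = (‖s‖) ^ 2 - 2 * s.re + 1 := by
      rw [Complex.sq_norm, Complex.sq_norm]
      simp [Complex.normSq_apply, Complex.sub_re, Complex.sub_im]
      ring
    have hdist : dist (φ 0) w = ‖w‖ := by
      rw [hφ0, Complex.dist_eq]; simp
    rw [hdist]
    -- (4(1-λ)|w|)² - (1-λ²)² = (λ² - a)(2 + 3λ² - a) ≥ 0  where a = s.re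
    have hkey : (4 * (1 - lam) * ‖w‖) ^ 2 - (1 - lam ^ 2) ^ 2
        = (lam ^ 2 - s.re) * (2 + 3 * lam ^ 2 - s.re) := by
      rw [← habs]
      rw [hnormsq]
      have : ‖s‖ = 2 * lam ^ 2 - s.re := by linarith
      rw [this]
      ring
    have hprod : 0 ≤ (lam ^ 2 - s.re) * (2 + 3 * lam ^ 2 - s.re) := by
      apply mul_nonneg (by linarith) (by nlinarith)
    have hineq : (1 - lam ^ 2) ^ 2 ≤ (4 * (1 - lam) * ‖w‖) ^ 2 := by linarith
    have hwnn : 0 ≤ ‖w‖ := norm_nonneg w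
    have hY : (0:ℝ) < 1 - lam ^ 2 := by nlinarith
    have h4 : (0:ℝ) < 4 * (1 - lam) := by linarith
    have hXY : 1 - lam ^ 2 ≤ 4 * (1 - lam) * ‖w‖ := by
      nlinarith [hineq, hwnn, hY, mul_nonneg h4.le hwnn]
    calc (1 + lam) / 4 = (1 - lam ^ 2) / (4 * (1 - lam)) := by
            field_simp
            ring
      _ ≤ (4 * (1 - lam) * ‖w‖) / (4 * (1 - lam)) :=
            (div_le_div_iff_of_pos_right h4).mpr hXY
      _ = ‖w‖ := by field_simp
  -- the specific frontier point w₀ = -(1+λ)/4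
  set w₀ : ℂ := ((-(1 + lam) / 4 : ℝ) : ℂ) with hw₀def
  have hs₀ : 4 * (1 - (lam : ℂ)) * w₀ + 1 = ((lam ^ 2 : ℝ) : ℂ) := by
    rw [hw₀def]; push_cast; ring
  have hfw₀ : f w₀ = 2 * lam ^ 2 := by
    rw [hfdef]
    simp only
    rw [hs₀, Complex.norm_real, Real.norm_eq_abs, Complex.ofReal_re, _root_.abs_of_nonneg (sq_nonneg lam)]
    ring
  have hw₀cl : w₀ ∈ closure Ω := by
    rw [Metric.mem_closure_iff]
    intro ε hε
    refine ⟨w₀ + ((ε / 2 : ℝ) : ℂ), ?_, ?_⟩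
    · show 2 * lam ^ 2 < f _
      have hs : 4 * (1 - (lam : ℂ)) * (w₀ + ((ε / 2 : ℝ) : ℂ)) + 1
          = ((lam ^ 2 + 2 * (1 - lam) * ε : ℝ) : ℂ) := by
        rw [hw₀def]; push_cast; ring
      rw [hfdef]
      simp only
      rw [hs, Complex.norm_real, Real.norm_eq_abs, Complex.ofReal_re,
        _root_.abs_of_nonneg (by nlinarith : (0:ℝ) ≤ lam ^ 2 + 2 * (1 - lam) * ε)]
      nlinarith
    · rw [Complex.dist_eq]
      have : w₀ - (w₀ + ((ε / 2 : ℝ) : ℂ)) = ((-(ε / 2) : ℝ) : ℂ) := by push_cast; ring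
      rw [this, Complex.norm_real, Real.norm_eq_abs]
      rw [abs_of_nonpos (by linarith)]
      linarith
  have hw₀fr : w₀ ∈ frontier Ω := by
    rw [hopen.frontier_eq]
    refine ⟨hw₀cl, ?_⟩
    intro hmem
    have : 2 * lam ^ 2 < f w₀ := hmem
    rw [hfw₀] at this
    exact lt_irrefl _ this
  have hub : Metric.infDist (φ 0) (frontier Ω) ≤ (1 + lam) / 4 := by
    have := Metric.infDist_le_dist_of_mem hw₀fr (x := φ 0)
    have hd : dist (φ 0) w₀ = (1 + lam) / 4 := by
      rw [hφ0, Complex.dist_eq]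
      simp only [zero_sub, norm_neg, hw₀def, Complex.norm_real, Real.norm_eq_abs]
      rw [abs_of_nonpos (by linarith)]
      ring
    linarith [this, hd.le]
  have hlb : (1 + lam) / 4 ≤ Metric.infDist (φ 0) (frontier Ω) := by
    by_contra hcon
    push_neg at hcon
    obtain ⟨y, hy, hdy⟩ := (Metric.infDist_lt_iff ⟨w₀, hw₀fr⟩).mp hcon
    exact absurd hdy (not_lt.mpr (hlow y hy))
  linarith
end
end

section
/- Let α ∈ [1,2] and define φ(z) = (1/(2α))·[((1+z)/(1−z))^α − 1] for z ∈ 𝔻, using the principal branch of powers. Then φ is univalent (injective) on 𝔻, φ(0) = 0, and dist(φ(0), ∂φ(𝔻)) = 1/(2α). -/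
/-
Write `φ = (g - 1) / (2α)` with `g z = C(z) ^ α` and `C z = (1 + z) / (1 - z)`. The Cayley map
`C` sends the unit disk bijectively onto the right half-plane `H`. On `H` the principal power
`w ↦ w ^ α` multiplies arguments by `α`, which for `1 ≤ α ≤ 2` keeps them inside `(-π, π)`:
hence it is injective there, and (taking `α`-th roots) its image contains `H ⊇ ball 1 1`.
Therefore `φ(𝔻)` contains the disk of radius `1/(2α)` about `φ 0 = 0`, while the point `-1/(2α)`
on its boundary circle corresponds to the omitted value `g = 0`, so it lies on the frontier.
-/

open Complex Metric Set

noncomputable section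

open scoped Real

theorem infDist_frontier_eq_of_ball_subset_s18 {E : Type*} [NormedAddCommGroup E] [NormedSpace ℝ E]
    {s : Set E} {x y : E} {r : ℝ} (hr : r ≠ 0) (hball : ball x r ⊆ s) (hy : y ∉ s)
    (hxy : dist x y = r) : infDist x (frontier s) = r := by
  have hy_closure : y ∈ closure s := by
    apply closure_mono hball
    rw [closure_ball x hr, mem_closedBall, dist_comm, hxy]
  have hy_frontier : y ∈ frontier s := ⟨hy_closure, fun h => hy (interior_subset h)⟩
  refine le_antisymm (hxy ▸ infDist_le_dist_of_mem hy_frontier) ?_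
  refine (le_infDist ⟨y, hy_frontier⟩).2 fun z hz => ?_
  have hz_ball : z ∉ ball x r := fun h =>
    hz.2 (isOpen_ball.subset_interior_iff.2 hball h)
  simpa [mem_ball, dist_comm] using hz_ball

namespace Complex

theorem re_one_add_div_one_sub_pos {z : ℂ} (hz : ‖z‖ < 1) : 0 < ((1 + z) / (1 - z)).re := by
  have hz1 : 1 - z ≠ 0 := by
    rintro h
    rw [← sub_eq_zero.1 h, norm_one] at hz
    exact lt_irrefl _ hz
  have hnum : (1 + z).re * (1 - z).re + (1 + z).im * (1 - z).im = 1 - ‖z‖ ^ 2 := by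
    rw [Complex.sq_norm, normSq_apply]
    simp only [add_re, add_im, sub_re, sub_im, one_re, one_im]
    ring
  rw [div_re, ← add_div, hnum]
  exact div_pos (by nlinarith [norm_nonneg z]) (normSq_pos.2 hz1)

theorem injOn_one_add_div_one_sub : InjOn (fun z : ℂ => (1 + z) / (1 - z)) {1}ᶜ := by
  intro z hz w hw h
  have hz1 : 1 - z ≠ 0 := sub_ne_zero.2 (Ne.symm hz)
  have hw1 : 1 - w ≠ 0 := sub_ne_zero.2 (Ne.symm hw)
  rw [div_eq_div_iff hz1 hw1] at h
  linear_combination h / 2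

theorem exists_norm_lt_one_one_add_div_one_sub_eq {w : ℂ} (hw : 0 < w.re) :
    ∃ z : ℂ, ‖z‖ < 1 ∧ (1 + z) / (1 - z) = w := by
  have hw1 : w + 1 ≠ 0 := fun h => by
    have := congrArg re h
    simp only [add_re, one_re, zero_re] at this
    linarith
  refine ⟨(w - 1) / (w + 1), ?_, ?_⟩
  · rw [norm_div, div_lt_one (norm_pos_iff.2 hw1), ← sq_lt_sq₀ (norm_nonneg _) (norm_nonneg _),
      Complex.sq_norm, Complex.sq_norm, normSq_apply, normSq_apply]
    simp only [sub_re, sub_im, add_re, add_im, one_re, one_im]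
    nlinarith
  · field_simp
    ring

theorem log_cpow_of_im_mem {x y : ℂ} (hx : x ≠ 0) (h₁ : -π < (log x * y).im)
    (h₂ : (log x * y).im ≤ π) : log (x ^ y) = log x * y := by
  rw [cpow_def_of_ne_zero hx, log_exp h₁ h₂]

theorem abs_im_log_mul_ofReal_lt_pi {w : ℂ} (hw : 0 < w.re) {β : ℝ} (hβ : |β| ≤ 2) :
    |(log w * β).im| < π := by
  have harg : |w.arg| < π / 2 := abs_arg_lt_pi_div_two_iff.2 (Or.inl hw)
  rw [im_mul_ofReal, log_im, abs_mul]
  nlinarith [abs_nonneg β, abs_nonneg w.arg]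

theorem injOn_cpow_ofReal_re_pos {β : ℝ} (hβ₀ : β ≠ 0) (hβ : |β| ≤ 2) :
    InjOn (fun w : ℂ => w ^ (β : ℂ)) {w | 0 < w.re} := by
  have hlog : ∀ w ∈ {w : ℂ | 0 < w.re}, log (w ^ (β : ℂ)) = log w * β := fun w hw => by
    have := abs_lt.1 (abs_im_log_mul_ofReal_lt_pi hw hβ)
    exact log_cpow_of_im_mem (ne_zero_of_re_pos hw) this.1 this.2.le
  intro z hz w hw h
  have := congrArg log h
  rw [hlog z hz, hlog w hw, mul_left_inj' (ofReal_ne_zero.2 hβ₀)] at this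
  rw [← exp_log (ne_zero_of_re_pos hz), this, exp_log (ne_zero_of_re_pos hw)]

theorem exists_re_pos_cpow_ofReal_eq {β : ℝ} (hβ : 1 ≤ |β|) {v : ℂ} (hv : 0 < v.re) :
    ∃ w : ℂ, 0 < w.re ∧ w ^ (β : ℂ) = v := by
  have hβ₀ : β ≠ 0 := abs_pos.1 (by linarith)
  have hβinv : |β⁻¹| ≤ 1 := by rw [abs_inv]; exact inv_le_one_of_one_le₀ hβ
  have him := abs_lt.1 (abs_im_log_mul_ofReal_lt_pi hv (hβinv.trans one_le_two))
  have hv₀ : v ≠ 0 := ne_zero_of_re_pos hv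
  refine ⟨v ^ ((β⁻¹ : ℝ) : ℂ), ?_, ?_⟩
  · have harg : |(v ^ ((β⁻¹ : ℝ) : ℂ)).arg| < π / 2 := by
      rw [← log_im, log_cpow_of_im_mem hv₀ him.1 him.2.le, im_mul_ofReal, log_im, abs_mul]
      have := abs_arg_lt_pi_div_two_iff.2 (Or.inl hv)
      nlinarith [abs_nonneg v.arg]
    exact (abs_arg_lt_pi_div_two_iff.1 harg).resolve_right
      (by simp [cpow_eq_zero_iff, hv₀])
  · rw [← cpow_mul _ him.1 him.2.le, ← ofReal_mul, inv_mul_cancel₀ hβ₀, ofReal_one,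
      cpow_one]

theorem re_pos_of_mem_ball_one {v : ℂ} (hv : v ∈ ball (1 : ℂ) 1) : 0 < v.re := by
  rw [mem_ball, dist_eq] at hv
  have := (abs_le.1 (abs_re_le_norm (v - 1))).1
  rw [sub_re, one_re] at this
  linarith

end Complex

theorem re_one_add_div_one_sub_pos_of_mem_unitDisk {z : ℂ} (hz : z ∈ unitDisk) :
    0 < ((1 + z) / (1 - z)).re :=
  re_one_add_div_one_sub_pos (mem_ball_zero_iff.1 hz)

theorem injOn_cpow_one_add_div_one_sub {α : ℝ} (hα₀ : α ≠ 0) (hα : |α| ≤ 2) :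
    InjOn (fun z : ℂ => ((1 + z) / (1 - z)) ^ (α : ℂ)) unitDisk :=
  (injOn_cpow_ofReal_re_pos hα₀ hα).comp
    (injOn_one_add_div_one_sub.mono fun _ hz => ne_of_mem_of_not_mem hz (by simp [unitDisk]))
    fun _ hz => re_one_add_div_one_sub_pos_of_mem_unitDisk hz

theorem ball_one_one_subset_image_cpow_one_add_div_one_sub {α : ℝ} (hα : 1 ≤ |α|) :
    ball (1 : ℂ) 1 ⊆ (fun z : ℂ => ((1 + z) / (1 - z)) ^ (α : ℂ)) '' unitDisk := by
  intro v hv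
  obtain ⟨w, hw, rfl⟩ := exists_re_pos_cpow_ofReal_eq hα (re_pos_of_mem_ball_one hv)
  obtain ⟨z, hz, rfl⟩ := exists_norm_lt_one_one_add_div_one_sub_eq hw
  exact ⟨z, mem_ball_zero_iff.2 hz, rfl⟩

/-- **Example (g).** For `α ∈ [1,2]`, the map
`φ(z) = (1/(2α))[((1+z)/(1-z))^α - 1]` (principal branch) is univalent on the
unit disk, `φ(0) = 0`, and `dist(φ(0), ∂φ(𝔻)) = 1/(2α)`. -/
theorem example_g_univalent_dist
    (α : ℝ) (hα : α ∈ Set.Icc (1 : ℝ) 2)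
    (φ : ℂ → ℂ)
    (hφ : ∀ z : ℂ, φ z = (1 / (2 * (α : ℂ))) *
      (((1 + z) / (1 - z)) ^ (α : ℂ) - 1)) :
    Set.InjOn φ unitDisk ∧
    φ 0 = 0 ∧
    Metric.infDist (φ 0) (frontier (φ '' unitDisk)) = 1 / (2 * α) := by
  obtain ⟨hα₁, hα₂⟩ := hα
  have hα_abs : |α| = α := abs_of_pos (by linarith)
  set c : ℂ := 1 / (2 * (α : ℂ)) with hc_def
  have hc : c ≠ 0 := one_div_ne_zero (mul_ne_zero two_ne_zero (ofReal_ne_zero.2 (by linarith)))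
  have hc_norm : ‖c‖ = 1 / (2 * α) := by
    rw [hc_def, norm_div, norm_one, norm_mul, Complex.norm_two, norm_real, Real.norm_eq_abs,
      hα_abs]
  have hφ₀ : φ 0 = 0 := by simp [hφ]
  refine ⟨fun z hz w hw h => ?_, hφ₀, ?_⟩
  · rw [hφ, hφ, mul_right_inj' hc, sub_left_inj] at h
    exact injOn_cpow_one_add_div_one_sub (by linarith) (by rw [hα_abs]; linarith) hz hw h
  have hball : ball 0 (1 / (2 * α)) ⊆ φ '' unitDisk := by
    intro u hu
    have hv : 1 + u / c ∈ ball (1 : ℂ) 1 := by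
      rw [mem_ball, dist_eq, add_sub_cancel_left, norm_div, div_lt_one (norm_pos_iff.2 hc),
        hc_norm, ← dist_zero_right]
      exact hu
    obtain ⟨z, hz, hzu⟩ :=
      ball_one_one_subset_image_cpow_one_add_div_one_sub (by rwa [hα_abs]) hv
    refine ⟨z, hz, ?_⟩
    beta_reduce at hzu
    rw [hφ, hzu, add_sub_cancel_left, mul_div_cancel₀ _ hc]
  have hmiss : -c ∉ φ '' unitDisk := by
    rintro ⟨z, hz, hzc⟩
    rw [hφ, ← mul_neg_one, mul_right_inj' hc, sub_eq_neg_self, cpow_eq_zero_iff] at hzc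
    exact (re_one_add_div_one_sub_pos_of_mem_unitDisk hz).ne' (by rw [hzc.1, zero_re])
  rw [hφ₀]
  exact infDist_frontier_eq_of_ball_subset_s18 (by positivity) hball hmiss
    (by rw [dist_zero_left, norm_neg, hc_norm])
end
end
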